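/- arXiv:1504.04990 — 10 statements merged into one kernel-verified Lean document; each statement's English description precedes it below -/
import Mathlib

section
/- For every pair of elements s, t of an inverse semigroup S and every partial representation π of S into a unital K-algebra B, one has π(s)ε_t = ε_{st}π(s), where ε_r = π(r)π(r*). -/
/-- In an inverse semigroup `(S, *, star)` we assume `s s* s = s` and that the
idempotents `s s*` commute.  A partial representation `π : S → B` into a unital
`K`-algebra `B` satisfies the three relations below. -/
theorem pi_epsilon_comm
    {S : Type*} [Semigroup S] [StarMul S]
    (hinv : ∀ s : S, s * star s * s = s)
    (hcomm : ∀ s t : S, (s * star s) * (t * star t) = (t * star t) * (s * star s))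
    {K : Type*} [CommRing K] {B : Type*} [Ring B] [Algebra K B]
    (π : S → B)
    (hπ1 : ∀ s t : S, π (star s) * π s * π t = π (star s) * π (s * t))
    (hπ2 : ∀ s t : S, π s * π t * π (star t) = π (s * t) * π (star t))
    (hπ3 : ∀ s : S, π s * π (star s) * π s = π s)
    (s t : S) :
    π s * (π t * π (star t)) = (π (s * t) * π (star (s * t))) * π s := by
  set a := s * t with ha
  -- commuting idempotents, cleaned up
  have hc : (star s * s) * (t * star t) = (t * star t) * (star s * s) := by
    have := hcomm (star s) t
    simpa [star_star] using this
  -- semigroup identity:  a * (star a * s) = a * star t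
  have hS : a * (star a * s) = a * star t := by
    have hst : star a = star t * star s := by rw [ha, star_mul]
    rw [hst]
    calc s * t * (star t * star s * s)
        = s * ((t * star t) * (star s * s)) := by
          simp only [mul_assoc]
      _ = s * ((star s * s) * (t * star t)) := by rw [hc]
      _ = (s * star s * s) * (t * star t) := by simp only [mul_assoc]
      _ = s * (t * star t) := by rw [hinv s]
      _ = s * t * star t := by rw [mul_assoc]
  -- LHS = π a * (π (star a) * π (a * star t))
  have hL : π s * (π t * π (star t)) = π a * (π (star a) * π (a * star t)) := by
    calc π s * (π t * π (star t))
        = π s * π t * π (star t) := by rw [mul_assoc]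
      _ = π a * π (star t) := hπ2 s t
      _ = (π a * π (star a) * π a) * π (star t) := by rw [hπ3 a]
      _ = π a * (π (star a) * π a * π (star t)) := by simp only [mul_assoc]
      _ = π a * (π (star a) * π (a * star t)) := by rw [hπ1 a (star t)]
  -- RHS = π a * (π (star a) * π (a * (star a * s)))
  have hR : (π a * π (star a)) * π s = π a * (π (star a) * π (a * (star a * s))) := by
    calc (π a * π (star a)) * π s
        = π (star (star a)) * π (star a) * π s := by rw [star_star]
      _ = π (star (star a)) * π (star a * s) := hπ1 (star a) s
      _ = π a * π (star a * s) := by rw [star_star]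
      _ = (π a * π (star a) * π a) * π (star a * s) := by rw [hπ3 a]
      _ = π a * (π (star a) * π a * π (star a * s)) := by simp only [mul_assoc]
      _ = π a * (π (star a) * π (a * (star a * s))) := by rw [hπ1 a (star a * s)]
  rw [hL, hR, hS]
end

section
/- For a partial representation π of an inverse semigroup S into a unital K-algebra B, the common identity ε_s ε_t = π(ss*t)π(t*s)π(s*tt*) holds for all s, t ∈ S, where ε_r = π(r)π(r*). -/
/-- In an inverse semigroup `(S, *, star)` we assume `s s* s = s` and that the
idempotents `s s*` commute.  A partial representation `π : S → B` into a unital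
`K`-algebra `B` satisfies the three relations below. -/
theorem epsilon_mul_formula
    {S : Type*} [Semigroup S] [StarMul S]
    (hinv : ∀ s : S, s * star s * s = s)
    (hcomm : ∀ s t : S, (s * star s) * (t * star t) = (t * star t) * (s * star s))
    {K : Type*} [CommRing K] {B : Type*} [Ring B] [Algebra K B]
    (π : S → B)
    (hπ1 : ∀ s t : S, π (star s) * π s * π t = π (star s) * π (s * t))
    (hπ2 : ∀ s t : S, π s * π t * π (star t) = π (s * t) * π (star t))
    (hπ3 : ∀ s : S, π s * π (star s) * π s = π s)
    (s t : S) :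
    (π s * π (star s)) * (π t * π (star t)) =
      π (s * star s * t) * π (star t * s) * π (star s * (t * star t)) := by
  have st : star (star s * t) = star t * s := by simp [star_mul, star_star]
  have e1 : π s * π (star s) * π t = π s * π (star s * t) := by
    simpa [star_star] using hπ1 (star s) t
  have e2 : π (star s * t) = π (star s * t) * π (star t * s) * π (star s * t) := by
    have := hπ3 (star s * t)
    rw [st] at this
    exact this.symm
  have e3 : π s * π (star s * t) * π (star t * s) =
      π (s * star s * t) * π (star t * s) := by
    have := hπ2 s (star s * t)
    rw [st, ← mul_assoc s] at this
    exact this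
  have e4 : π (star t * s) * π (star s * t) * π (star t) =
      π (star t * s) * π (star s * (t * star t)) := by
    have := hπ1 (star s * t) (star t)
    rw [st, mul_assoc (star s)] at this
    exact this
  calc (π s * π (star s)) * (π t * π (star t))
      = (π s * π (star s) * π t) * π (star t) := by noncomm_ring
    _ = (π s * π (star s * t)) * π (star t) := by rw [e1]
    _ = (π s * (π (star s * t) * π (star t * s) * π (star s * t))) * π (star t) := by
        rw [← e2]
    _ = (π s * π (star s * t) * π (star t * s)) *
          (π (star s * t) * π (star t)) := by noncomm_ring
    _ = (π (s * star s * t) * π (star t * s)) * (π (star s * t) * π (star t)) := by rw [e3]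
    _ = π (s * star s * t) * (π (star t * s) * π (star s * t) * π (star t)) := by
        noncomm_ring
    _ = π (s * star s * t) * (π (star t * s) * π (star s * (t * star t))) := by rw [e4]
    _ = π (s * star s * t) * π (star t * s) * π (star s * (t * star t)) := by noncomm_ring
end

section
/- Let α be a partial action of a unital inverse semigroup S on an algebra A, where each X_s is unital with identity 1_s, and let A ⋊_α S be the algebraic crossed product. Then the map π_α : S → A ⋊_α S, s ↦ (the class of) 1_s δ_s, is a partial representation, i.e. π_α(s*)π_α(s)π_α(t) = π_α(s*)π_α(st), π_α(s)π_α(t)π_α(t*) = π_α(st)π_α(t*), and π_α(s)π_α(s*)π_α(s) = π_α(s) for all s, t ∈ S. -/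
open Finsupp

noncomputable section

/-- The natural partial order on an inverse semigroup: `r ≤ t` iff `r = t r* r`. -/
def sle {S : Type*} [Mul S] [Star S] (r t : S) : Prop := r = t * (star r * r)

/-- A partial action of a unital inverse semigroup `S` on an associative algebra `A`:
ideals `X s` and isomorphisms `act s : X (star s) → X s`. -/
structure PartialAction (S : Type*) [Monoid S] [StarMul S]
    (A : Type*) [NonUnitalRing A] where
  X : S → Set A
  zero_mem : ∀ s, (0 : A) ∈ X s
  add_mem : ∀ s {a b : A}, a ∈ X s → b ∈ X s → a + b ∈ X s
  neg_mem : ∀ s {a : A}, a ∈ X s → -a ∈ X s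
  mul_mem_left : ∀ s (a : A) {b : A}, b ∈ X s → a * b ∈ X s
  mul_mem_right : ∀ s (a : A) {b : A}, b ∈ X s → b * a ∈ X s
  act : S → A → A
  X_one : X 1 = Set.univ
  act_one : ∀ a : A, act 1 a = a
  act_add : ∀ s {a b : A}, a ∈ X (star s) → b ∈ X (star s) →
    act s (a + b) = act s a + act s b
  act_mul : ∀ s {a b : A}, a ∈ X (star s) → b ∈ X (star s) →
    act s (a * b) = act s a * act s b
  mem_act : ∀ s {a : A}, a ∈ X (star s) → act s a ∈ X s
  act_act : ∀ s {a : A}, a ∈ X (star s) → act (star s) (act s a) = a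
  range_eq : ∀ s t, act s '' (X (star s) ∩ X t) = X s ∩ X (s * t)
  comp : ∀ s t {a : A}, a ∈ X (star t) → act t a ∈ X t ∩ X (star s) →
    act s (act t a) = act (s * t) a

namespace PartialAction

variable {S : Type*} [Monoid S] [StarMul S] {A : Type*} [NonUnitalRing A]
variable (P : PartialAction S A)

theorem mul_term_mem (s t : S) {a b : A} (ha : a ∈ P.X s) (hb : b ∈ P.X t) :
    P.act s (P.act (star s) a * b) ∈ P.X (s * t) := by
  have h1 : a ∈ P.X (star (star s)) := by rwa [star_star]
  have h2 := P.mem_act (star s) h1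
  have h3 : P.act (star s) a * b ∈ P.X (star s) ∩ P.X t :=
    ⟨P.mul_mem_right _ b h2, P.mul_mem_left t _ hb⟩
  have h4 := Set.mem_image_of_mem (P.act s) h3
  rw [P.range_eq s t] at h4
  exact h4.2

theorem sum_mem {ι : Type*} (u : S) (tt : Finset ι) (F : ι → A)
    (h : ∀ i ∈ tt, F i ∈ P.X u) : (∑ i ∈ tt, F i) ∈ P.X u :=
  Finset.sum_induction F (· ∈ P.X u) (fun _ _ ha hb => P.add_mem u ha hb)
    (P.zero_mem u) h

/-- The algebra `L` of formal sums `Σ a_s δ_s` with `a_s ∈ X s`. -/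
def L : Type _ := {f : S →₀ A // ∀ u, f u ∈ P.X u}

instance : Zero P.L := ⟨⟨0, fun u => by simpa using P.zero_mem u⟩⟩

instance : Add P.L :=
  ⟨fun f g => ⟨f.1 + g.1, fun u => by
    rw [Finsupp.add_apply]; exact P.add_mem u (f.2 u) (g.2 u)⟩⟩

instance : Mul P.L :=
  ⟨fun f g =>
    ⟨f.1.sum fun s a => g.1.sum fun t b =>
        Finsupp.single (s * t) (P.act s (P.act (star s) a * b)), by
      intro u
      classical
      rw [Finsupp.sum_apply]
      refine P.sum_mem u _ _ fun s hs => ?_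
      dsimp only
      rw [Finsupp.sum_apply]
      refine P.sum_mem u _ _ fun t ht => ?_
      dsimp only
      rw [Finsupp.single_apply]
      split_ifs with h
      · exact h ▸ P.mul_term_mem s t (f.2 s) (g.2 t)
      · exact P.zero_mem u⟩⟩

/-- `a δ_r` as an element of `L`. -/
def del (r : S) (a : A) (h : a ∈ P.X r) : P.L :=
  ⟨Finsupp.single r a, fun u => by
    classical
    rw [Finsupp.single_apply]
    split_ifs with hh
    · exact hh ▸ h
    · exact P.zero_mem u⟩

/-- The relation generating the ideal `I`: `a δ_r ~ a δ_t` whenever `r ≤ t`, `a ∈ X r`. -/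
def crel : P.L → P.L → Prop := fun x y =>
  ∃ (r t : S) (a : A) (h : a ∈ P.X r) (h' : a ∈ P.X t),
    sle r t ∧ x = P.del r a h ∧ y = P.del t a h'

/-- The algebraic crossed product `A ⋊_α S = L / I`. -/
abbrev CP : Type _ := (ringConGen P.crel).Quotient

/-- The quotient map `L → A ⋊_α S`. -/
def toCP : P.L → P.CP := fun x => (x : P.CP)

/-- The partial representation `s ↦ 1_s δ_s`, given identities `one s` for the ideals. -/
def rep (one : S → A) (hmem : ∀ s, one s ∈ P.X s) : S → P.CP :=
  fun s => P.toCP (P.del s (one s) (hmem s))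

end PartialAction

namespace PartialAction

variable {S : Type*} [Monoid S] [StarMul S] {A : Type*} [NonUnitalRing A]
variable (P : PartialAction S A)

theorem act_zero (s : S) : P.act s 0 = 0 := by
  have h := P.act_add s (P.zero_mem (star s)) (P.zero_mem (star s))
  rw [add_zero] at h
  exact left_eq_add.mp h

theorem act_act' (s : S) {a : A} (h : a ∈ P.X s) :
    P.act s (P.act (star s) a) = a := by
  have h' : a ∈ P.X (star (star s)) := by simpa using h
  simpa using P.act_act (star s) h'

theorem act_self (u : S) (hu : star u = u) (huu : u * u = u) {x : A}
    (hx : x ∈ P.X u) : P.act u x = x := by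
  have hx' : x ∈ P.X (star u) := by rwa [hu]
  have h1 : P.act u x ∈ P.X u := P.mem_act u hx'
  have h2 : P.act u x ∈ P.X (star u) := by rwa [hu]
  have hc := P.comp u u hx' ⟨h1, h2⟩
  rw [huu] at hc
  have ha := P.act_act u hx'
  rw [hu] at ha
  exact hc.symm.trans ha

section

variable (one : S → A) (hmem : ∀ s, one s ∈ P.X s)
  (hl : ∀ s, ∀ a ∈ P.X s, one s * a = a) (hr : ∀ s, ∀ a ∈ P.X s, a * one s = a)

include hmem hl hr

theorem act_star_one (s : S) : P.act (star s) (one s) = one (star s) := by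
  have key : ∀ a ∈ P.X (star s), P.act (star s) (one s) * a = a := by
    intro a ha
    have h1 : P.act s a ∈ P.X s := P.mem_act s ha
    have m1 : one s ∈ P.X (star (star s)) := by simpa using hmem s
    have m2 : P.act s a ∈ P.X (star (star s)) := by simpa using h1
    have h3 := P.act_mul (star s) m1 m2
    rw [hl s _ h1] at h3
    rw [P.act_act s ha] at h3
    exact h3.symm
  have h4 := key (one (star s)) (hmem (star s))
  have h5 := hr (star s) (P.act (star s) (one s))
    (P.mem_act (star s) (by simpa using hmem s))
  exact h5.symm.trans h4

theorem act_one_star (s : S) : P.act s (one (star s)) = one s := by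
  have := act_star_one P one hmem hl hr (star s)
  simpa using this

theorem one_star_mem (s : S) : one (star s) ∈ P.X (star s * s) := by
  have h := P.mul_term_mem (star s) s (hmem (star s)) (hmem s)
  simp only [star_star] at h
  rw [act_one_star P one hmem hl hr s, hl s _ (hmem s),
    act_star_one P one hmem hl hr s] at h
  exact h

theorem one_mul_star_mem (s : S) : one s ∈ P.X (s * star s) := by
  simpa using one_star_mem P one hmem hl hr (star s)

theorem act_one_mul (s t : S) :
    P.act s (one (star s) * one t) = one s * one (s * t) := by
  have he : one (star s) * one t ∈ P.X (star s) :=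
    P.mul_mem_right (star s) (one t) (hmem (star s))
  have het : one (star s) * one t ∈ P.X t :=
    P.mul_mem_left t (one (star s)) (hmem t)
  have hc : P.act s (one (star s) * one t) ∈ P.X s ∩ P.X (s * t) := by
    rw [← P.range_eq s t]; exact Set.mem_image_of_mem _ ⟨he, het⟩
  have hy : one s * one (s * t) ∈ P.X s ∩ P.X (s * t) :=
    ⟨P.mul_mem_right s (one (s * t)) (hmem s),
      P.mul_mem_left (s * t) (one s) (hmem (s * t))⟩
  rw [← P.range_eq s t] at hy
  obtain ⟨x, hx, hxe⟩ := hy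
  have hex : (one (star s) * one t) * x = x := by
    rw [mul_assoc, hl t x hx.2, hl (star s) x hx.1]
  have step1 : P.act s (one (star s) * one t) * (one s * one (s * t))
      = one s * one (s * t) := by
    rw [← hxe, ← P.act_mul s he hx.1, hex]
  have step2 : P.act s (one (star s) * one t) * (one s * one (s * t))
      = P.act s (one (star s) * one t) := by
    rw [← mul_assoc, hr s _ hc.1, hr (s * t) _ hc.2]
  exact step2.symm.trans step1

end

theorem del_mul {u v : S} {a b : A} (ha : a ∈ P.X u) (hb : b ∈ P.X v) :
    P.del u a ha * P.del v b hb
      = P.del (u * v) (P.act u (P.act (star u) a * b)) (P.mul_term_mem u v ha hb) := by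
  classical
  apply Subtype.ext
  show ((Finsupp.single u a).sum fun s' a' => (Finsupp.single v b).sum fun t' b' =>
      Finsupp.single (s' * t') (P.act s' (P.act (star s') a' * b')))
      = Finsupp.single (u * v) (P.act u (P.act (star u) a * b))
  rw [Finsupp.sum_single_index (by simp [P.act_zero]),
    Finsupp.sum_single_index (by simp [P.act_zero])]

theorem del_congr {u v : S} {a b : A} (huv : u = v) (hab : a = b)
    (ha : a ∈ P.X u) (hb : b ∈ P.X v) : P.del u a ha = P.del v b hb := by
  subst huv; subst hab; rfl

theorem toCP_mul (x y : P.L) : P.toCP (x * y) = P.toCP x * P.toCP y := rfl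

end PartialAction


/-- If each `X_s` is unital with identity `1_s`, then `s ↦ 1_s δ_s` is a partial
representation of `S` in the algebraic crossed product `A ⋊_α S`. -/
theorem rep_is_partialRep
    {S : Type*} [Monoid S] [StarMul S]
    (hinv : ∀ s : S, s * star s * s = s)
    (hcomm : ∀ s t : S, (s * star s) * (t * star t) = (t * star t) * (s * star s))
    {A : Type*} [NonUnitalRing A] (P : PartialAction S A)
    (one : S → A) (hmem : ∀ s, one s ∈ P.X s)
    (hl : ∀ s, ∀ a ∈ P.X s, one s * a = a)
    (hr : ∀ s, ∀ a ∈ P.X s, a * one s = a) :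
    (∀ s t : S, P.rep one hmem (star s) * P.rep one hmem s * P.rep one hmem t =
        P.rep one hmem (star s) * P.rep one hmem (s * t)) ∧
    (∀ s t : S, P.rep one hmem s * P.rep one hmem t * P.rep one hmem (star t) =
        P.rep one hmem (s * t) * P.rep one hmem (star t)) ∧
    (∀ s : S, P.rep one hmem s * P.rep one hmem (star s) * P.rep one hmem s =
        P.rep one hmem s) := by
  
  classical
  have hts : ∀ u : S, star (star u * u) = star u * u := fun u => by
    rw [star_mul, star_star]
  have hid : ∀ u : S, (star u * u) * (star u * u) = star u * u := fun u => by
    have h : star u * u * star u = star u := by simpa using hinv (star u)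
    rw [← mul_assoc, h]
  have hts' : ∀ u : S, star (u * star u) = u * star u := fun u => by
    rw [star_mul, star_star]
  have hid' : ∀ u : S, (u * star u) * (u * star u) = u * star u := fun u => by
    rw [← mul_assoc, hinv u]
  refine ⟨fun s t => ?_, fun s t => ?_, fun s => ?_⟩
  · -- π(s*) π(s) π(t) = π(s*) π(st)
    simp only [PartialAction.rep]
    rw [← P.toCP_mul, ← P.toCP_mul, ← P.toCP_mul]
    refine congrArg P.toCP ?_
    rw [P.del_mul, P.del_mul, P.del_mul]
    refine P.del_congr (mul_assoc _ _ _) ?_ _ _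
    simp only [star_star, hts s]
    rw [P.act_one_star one hmem hl hr s, hl s _ (hmem s),
      P.act_star_one one hmem hl hr s]
    rw [P.act_self (star s * s) (hts s) (hid s) (P.one_star_mem one hmem hl hr s)]
    rw [P.act_self (star s * s) (hts s) (hid s)
      (P.mul_mem_right (star s * s) (one t) (P.one_star_mem one hmem hl hr s))]
    rw [← P.act_one_mul one hmem hl hr s t]
    rw [P.act_act s (P.mul_mem_right (star s) (one t) (hmem (star s)))]
  · -- π(s) π(t) π(t*) = π(st) π(t*)
    simp only [PartialAction.rep]
    rw [← P.toCP_mul, ← P.toCP_mul, ← P.toCP_mul]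
    refine congrArg P.toCP ?_
    rw [P.del_mul, P.del_mul, P.del_mul]
    refine P.del_congr rfl ?_ _ _
    rw [P.act_star_one one hmem hl hr s, P.act_one_mul one hmem hl hr s t,
      P.act_star_one one hmem hl hr (s * t)]
    set z := one (star (s * t)) * one (star t) with hzdef
    have hz1 : z ∈ P.X (star t) := P.mul_mem_left (star t) _ (hmem (star t))
    have hzw : z ∈ P.X (star (s * t)) :=
      P.mul_mem_right (star (s * t)) _ (hmem (star (s * t)))
    have hy1 : P.act t z ∈ P.X t ∩ P.X (t * star t) := by
      rw [← P.range_eq t (star t)]; exact Set.mem_image_of_mem _ ⟨hz1, hz1⟩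
    have hzw' : z ∈ P.X (star t * star s) := by
      have := hzw; rwa [star_mul] at this
    have hy2 : P.act t z ∈ P.X t ∩ P.X (t * (star t * star s)) := by
      rw [← P.range_eq t (star t * star s)]
      exact Set.mem_image_of_mem _ ⟨hz1, hzw'⟩
    have hy3 : P.act t z ∈ P.X ((t * star t) * star s) := by
      rw [mul_assoc]; exact hy2.2
    have hys : P.act t z ∈ P.X (star s) := by
      have himg : P.act t z ∈ P.X (t * star t) ∩ P.X ((t * star t) * star s) :=
        ⟨hy1.2, hy3⟩
      rw [← P.range_eq (t * star t) (star s)] at himg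
      obtain ⟨ξ, hξ, hξe⟩ := himg
      have hξu : ξ ∈ P.X (t * star t) := by
        have := hξ.1; rwa [hts' t] at this
      rw [← hξe, P.act_self (t * star t) (hts' t) (hid' t) hξu]
      exact hξ.2
    have hcomp : P.act s (P.act t z) = P.act (s * t) z :=
      P.comp s t hz1 ⟨hy1.1, hys⟩
    have hvs : P.act (s * t) z ∈ P.X s := by
      rw [← hcomp]; exact P.mem_act s hys
    have hvw : P.act (s * t) z ∈ P.X (s * t) := P.mem_act (s * t) hzw
    have h1w : one s * one (s * t) ∈ P.X (s * t) :=
      P.mul_mem_left (s * t) _ (hmem (s * t))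
    have h1w' : one s * one (s * t) ∈ P.X (star (star (s * t))) := by
      rwa [star_star]
    have hq : P.act (star (s * t)) (one s * one (s * t)) ∈ P.X (star (s * t)) :=
      P.mem_act (star (s * t)) h1w'
    have hqz : P.act (star (s * t)) (one s * one (s * t)) * one (star t)
        = P.act (star (s * t)) (one s * one (s * t)) * z := by
      rw [hzdef, ← mul_assoc, hr (star (s * t)) _ hq]
    rw [hqz, P.act_mul (s * t) hq hzw, P.act_act' (s * t) h1w,
      mul_assoc, hl (s * t) _ hvw, hl s _ hvs]
  · -- π(s) π(s*) π(s) = π(s)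
    simp only [PartialAction.rep]
    rw [← P.toCP_mul, ← P.toCP_mul]
    refine congrArg P.toCP ?_
    rw [P.del_mul, P.del_mul]
    refine P.del_congr (hinv s) ?_ _ _
    rw [P.act_star_one one hmem hl hr s, hl (star s) _ (hmem (star s)),
      P.act_one_star one hmem hl hr s, hts' s]
    rw [P.act_self (s * star s) (hts' s) (hid' s) (P.one_mul_star_mem one hmem hl hr s)]
    rw [hl s _ (hmem s)]
    rw [P.act_self (s * star s) (hts' s) (hid' s) (P.one_mul_star_mem one hmem hl hr s)]
end
end

section
/- Let π be a partial representation of an inverse semigroup S into a unital K-algebra B, let A be the subalgebra of B generated by the commuting idempotents ε_s = π(s)π(s*), and let X_s = ε_s A. Then for each s ∈ S, conjugation α_s(a) = π(s) a π(s*) maps X_{s*} into X_s. -/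
/-- `ε_s = π s π (s*)`. -/
def eps {S : Type*} [Semigroup S] [StarMul S] {B : Type*} [Ring B]
    (π : S → B) (s : S) : B := π s * π (star s)

/-- `X_s = ε_s A`, where `A` is the `K`-subalgebra of `B` generated by all the
idempotents `ε_u`. -/
def Xset (K : Type*) [CommRing K] {S : Type*} [Semigroup S] [StarMul S]
    {B : Type*} [Ring B] [Algebra K B] (π : S → B) (s : S) : Set B :=
  {x : B | ∃ c ∈ NonUnitalAlgebra.adjoin K (Set.range (eps π)), x = eps π s * c}

section Aux

variable {S : Type*} [Semigroup S] [StarMul S] {B : Type*} [Ring B] (π : S → B)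
variable (hπ1 : ∀ s t : S, π (star s) * π s * π t = π (star s) * π (s * t))
variable (hπ2 : ∀ s t : S, π s * π t * π (star t) = π (s * t) * π (star t))
variable (hπ3 : ∀ s : S, π s * π (star s) * π s = π s)

include hπ1 hπ3 in
/-- `π a · π b = ε_a · π(ab)`. -/
lemma key1 (a b : S) : π a * π b = eps π a * π (a * b) := by
  unfold eps
  calc π a * π b = (π a * π (star a) * π a) * π b := by rw [hπ3]
    _ = π a * (π (star a) * π a * π b) := by noncomm_ring
    _ = π a * (π (star a) * π (a * b)) := by rw [hπ1]
    _ = π a * π (star a) * π (a * b) := by noncomm_ring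

include hπ2 hπ3 in
/-- `π a · π b = π(ab) · ε_{b*}`. -/
lemma key2 (a b : S) : π a * π b = π (a * b) * eps π (star b) := by
  unfold eps
  rw [star_star]
  calc π a * π b = π a * (π b * π (star b) * π b) := by rw [hπ3]
    _ = (π a * π b * π (star b)) * π b := by noncomm_ring
    _ = (π (a * b) * π (star b)) * π b := by rw [hπ2]
    _ = π (a * b) * (π (star b) * π b) := by noncomm_ring

include hπ1 hπ3 in
lemma pistar_pi (hinv : ∀ s : S, s * star s * s = s) (a : S) :
    π (star a) * π (a * star a) = π (star a) := by
  have h1 : star a * (a * star a) = star a := by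
    rw [← mul_assoc]
    simpa [star_star] using hinv (star a)
  calc π (star a) * π (a * star a)
      = eps π (star a) * π (star a * (a * star a)) := key1 π hπ1 hπ3 (star a) (a * star a)
    _ = eps π (star a) * π (star a) := by rw [h1]
    _ = π (star a) * π (star (star a)) * π (star a) := by unfold eps; noncomm_ring
    _ = π (star a) := hπ3 (star a)

include hπ1 hπ3 in
lemma eps_pi (hinv : ∀ s : S, s * star s * s = s) (a : S) :
    eps π a * π (a * star a) = eps π a := by
  unfold eps
  rw [mul_assoc, pistar_pi π hπ1 hπ3 hinv a]

end Aux

theorem conj_maps_X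
    {S : Type*} [Semigroup S] [StarMul S]
    (hinv : ∀ s : S, s * star s * s = s)
    (hcomm : ∀ s t : S, (s * star s) * (t * star t) = (t * star t) * (s * star s))
    {K : Type*} [CommRing K] {B : Type*} [Ring B] [Algebra K B]
    (π : S → B)
    (hπ1 : ∀ s t : S, π (star s) * π s * π t = π (star s) * π (s * t))
    (hπ2 : ∀ s t : S, π s * π t * π (star t) = π (s * t) * π (star t))
    (hπ3 : ∀ s : S, π s * π (star s) * π s = π s)
    (s : S) :
    ∀ a ∈ Xset K π (star s), π s * a * π (star s) ∈ Xset K π s := by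
  -- notation
  set A := NonUnitalAlgebra.adjoin K (Set.range (eps π)) with hA
  -- Step 1: the key invariant for products of generators.
  have Q : ∀ x ∈ Subsemigroup.closure (Set.range (eps π)), ∀ r : S,
      ∃ d e, d ∈ A ∧ star e = e ∧ e * e = e ∧ π r * x = d * π (r * e) := by
    intro x hx
    induction hx using Subsemigroup.closure_induction with
    | mem x hx =>
      obtain ⟨t, rfl⟩ := hx
      intro r
      refine ⟨eps π (r * t), t * star t, ?_, ?_, ?_, ?_⟩
      · exact NonUnitalAlgebra.subset_adjoin K ⟨r * t, rfl⟩
      · rw [star_mul, star_star]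
      · rw [← mul_assoc, hinv]
      · calc π r * eps π t = π r * π t * π (star t) := by unfold eps; rw [mul_assoc]
          _ = π (r * t) * π (star t) := hπ2 r t
          _ = eps π (r * t) * π (r * t * star t) := key1 π hπ1 hπ3 (r * t) (star t)
          _ = eps π (r * t) * π (r * (t * star t)) := by rw [mul_assoc]
    | mul x y hx hy ihx ihy =>
      intro r
      obtain ⟨d, e, hd, he1, he2, heq⟩ := ihx r
      obtain ⟨d', e', hd'1, he'1, he'2, heq'⟩ := ihy (r * e)
      have hcee' : e * e' = e' * e := by
        have := hcomm e e'
        rwa [he1, he'1, he2, he'2] at this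
      refine ⟨d * d', e * e', mul_mem hd hd'1, ?_, ?_, ?_⟩
      · rw [star_mul, he1, he'1, hcee']
      · calc e * e' * (e * e') = e * (e' * e) * e' := by noncomm_ring
          _ = e * (e * e') * e' := by rw [hcee']
          _ = (e * e) * (e' * e') := by noncomm_ring
          _ = e * e' := by rw [he2, he'2]
      · calc π r * (x * y) = (π r * x) * y := by rw [mul_assoc]
          _ = d * (π (r * e) * y) := by rw [heq, mul_assoc]
          _ = d * (d' * π (r * e * e')) := by rw [heq']
          _ = d * d' * π (r * (e * e')) := by rw [← mul_assoc, mul_assoc r e e']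
  -- Step 2: conjugation maps the adjoined algebra into itself.
  have main : ∀ c ∈ A, π s * c * π (star s) ∈ A := by
    intro c hc
    have hc' : c ∈ Submodule.span K (Subsemigroup.closure (Set.range (eps π)) : Set B) := by
      rw [← NonUnitalAlgebra.adjoin_eq_span]
      exact hc
    clear hc
    induction hc' using Submodule.span_induction with
    | mem x hx =>
      obtain ⟨d, e, hd, he1, he2, heq⟩ := Q x hx s
      have hse : s * e * star (s * e) = s * e * star s := by
        rw [star_mul, he1, ← mul_assoc, mul_assoc s e e, he2]
      have : π (s * e) * π (star s) = eps π (s * e) := by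
        calc π (s * e) * π (star s)
            = eps π (s * e) * π (s * e * star s) := key1 π hπ1 hπ3 (s * e) (star s)
          _ = eps π (s * e) * π (s * e * star (s * e)) := by rw [hse]
          _ = eps π (s * e) := eps_pi π hπ1 hπ3 hinv (s * e)
      have heq2 : π s * x * π (star s) = d * eps π (s * e) := by
        rw [heq, mul_assoc, this]
      rw [heq2]
      exact mul_mem hd (NonUnitalAlgebra.subset_adjoin K ⟨s * e, rfl⟩)
    | zero => simpa using zero_mem A
    | add x y hx hy ihx ihy =>
      have : π s * (x + y) * π (star s) = π s * x * π (star s) + π s * y * π (star s) := by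
        noncomm_ring
      rw [this]; exact add_mem ihx ihy
    | smul k x hx ihx =>
      have : π s * (k • x) * π (star s) = k • (π s * x * π (star s)) := by
        rw [mul_smul_comm, smul_mul_assoc]
      rw [this]; exact SMulMemClass.smul_mem k ihx
  -- Step 3: assemble.
  rintro a ⟨c, hc, rfl⟩
  have habs : π s * eps π (star s) = π s := by
    unfold eps
    rw [star_star, ← mul_assoc, hπ3]
  have key : π s * (eps π (star s) * c) * π (star s) = π s * c * π (star s) := by
    rw [← mul_assoc, habs]
  rw [key]
  refine ⟨π s * c * π (star s), main c hc, ?_⟩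
  have : eps π s * (π s * c * π (star s)) = π s * (eps π (star s) * c) * π (star s) := by
    unfold eps
    rw [star_star]
    noncomm_ring
  rw [this, key]
end

section
/- With notation as below, for all s, t ∈ S one has α_s(X_{s*} ∩ X_t) = X_s ∩ X_{st}, where α_s(a) = π(s) a π(s*). -/
section PR

variable {S : Type*} [Semigroup S] [StarMul S] {B : Type*} [Ring B]

private lemma star_e (s : S) : star (s * star s) = s * star s := by
  rw [star_mul, star_star]

private lemma e_idem (hinv : ∀ s : S, s * star s * s = s) (s : S) :
    (s * star s) * (s * star s) = s * star s := by
  rw [← mul_assoc, hinv]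

variable (π : S → B)

private lemma pd1 (hπ1 : ∀ s t : S, π (star s) * π s * π t = π (star s) * π (s * t))
    (s t : S) : π s * π (star s) * π t = π s * π (star s * t) := by
  have h := hπ1 (star s) t
  rwa [star_star] at h

private lemma pd1c (hπ1 : ∀ s t : S, π (star s) * π s * π t = π (star s) * π (s * t))
    (s t : S) (c : B) :
    π s * (π (star s) * (π t * c)) = π s * (π (star s * t) * c) := by
  rw [← mul_assoc, ← mul_assoc, pd1 π hπ1, mul_assoc]

private lemma pd2 (hπ2 : ∀ s t : S, π s * π t * π (star t) = π (s * t) * π (star t))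
    (hπ3 : ∀ s : S, π s * π (star s) * π s = π s)
    (s : S) : π (s * star s) * π s = π s := by
  have h := hπ2 s (star s)
  rw [star_star] at h
  rw [← h, hπ3]

private lemma pd2c (hπ2 : ∀ s t : S, π s * π t * π (star t) = π (s * t) * π (star t))
    (hπ3 : ∀ s : S, π s * π (star s) * π s = π s)
    (s : S) (c : B) : π (s * star s) * (π s * c) = π s * c := by
  rw [← mul_assoc, pd2 π hπ2 hπ3]

private lemma pidem (hπ2 : ∀ s t : S, π s * π t * π (star t) = π (s * t) * π (star t))
    (hπ3 : ∀ s : S, π s * π (star s) * π s = π s)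
    (h : S) (hh : star h = h) (h2 : h * h = h) : π h * π h = π h := by
  have := pd2 π hπ2 hπ3 h
  rwa [hh, h2] at this

private lemma pd6 (hπ2 : ∀ s t : S, π s * π t * π (star t) = π (s * t) * π (star t))
    (h : S) (hh : star h = h) (hidem : π h * π h = π h) (t : S) :
    π t * π h = π (t * h) * π h := by
  have h2 := hπ2 t h
  rw [hh] at h2
  rw [← h2, mul_assoc, hidem]

private lemma pd6c (hπ2 : ∀ s t : S, π s * π t * π (star t) = π (s * t) * π (star t))
    (h : S) (hh : star h = h) (hidem : π h * π h = π h) (t : S) (c : B) :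
    π t * (π h * c) = π (t * h) * (π h * c) := by
  rw [← mul_assoc, pd6 π hπ2 h hh hidem, mul_assoc]

private lemma L_idem (hπ3 : ∀ s : S, π s * π (star s) * π s = π s) (s : S) :
    eps π s * eps π s = eps π s := by
  simp only [eps]
  rw [← mul_assoc, mul_assoc (π s), ← mul_assoc (π s), hπ3]

private lemma L_C (hπ2 : ∀ s t : S, π s * π t * π (star t) = π (s * t) * π (star t))
    (hπ3 : ∀ s : S, π s * π (star s) * π s = π s)
    (s u : S) : π s * eps π u * π (star s) = eps π (s * u) * eps π s := by
  have h3s : π (star s) * π s * π (star s) = π (star s) := by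
    have := hπ3 (star s); rwa [star_star] at this
  have step2 : π (star u) * π (star s) = π (star u * star s) * (π s * π (star s)) := by
    have h2 := hπ2 (star u) (star s)
    rw [star_star] at h2
    conv_lhs => rw [← h3s]
    rw [← mul_assoc, ← mul_assoc, h2, mul_assoc]
  simp only [eps, star_mul]
  rw [← mul_assoc, hπ2, mul_assoc, step2, mul_assoc]

private lemma L_dag (hπ1 : ∀ s t : S, π (star s) * π s * π t = π (star s) * π (s * t))
    (hπ2 : ∀ s t : S, π s * π t * π (star t) = π (s * t) * π (star t))
    (hπ3 : ∀ s : S, π s * π (star s) * π s = π s)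
    (p q : S) :
    eps π p * eps π q * eps π p = eps π (p * star p * q) * eps π p := by
  have hC := L_C π hπ2 hπ3 p (star p * q)
  rw [← mul_assoc] at hC
  rw [← hC]
  have expand : π p * eps π (star p * q) * π (star p) = eps π p * eps π q * eps π p := by
    simp only [eps, star_mul, star_star]
    calc π p * (π (star p * q) * π (star q * p)) * π (star p)
        = (π p * π (star p * q)) * (π (star q * p) * π (star p)) := by
          rw [← mul_assoc, mul_assoc]
      _ = (π p * π (star p) * π q) * (π (star q) * π p * π (star p)) := by
          rw [pd1 π hπ1 p q, hπ2 (star q) p]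
      _ = π p * π (star p) * (π q * π (star q)) * (π p * π (star p)) := by
          simp only [mul_assoc]
  rw [expand]

private lemma L_M (hinv : ∀ s : S, s * star s * s = s)
    (hcomm : ∀ s t : S, (s * star s) * (t * star t) = (t * star t) * (s * star s))
    (hπ1 : ∀ s t : S, π (star s) * π s * π t = π (star s) * π (s * t))
    (hπ2 : ∀ s t : S, π s * π t * π (star t) = π (s * t) * π (star t))
    (hπ3 : ∀ s : S, π s * π (star s) * π s = π s)
    (p q : S) :
    eps π p * eps π q = eps π (q * star q * p) * eps π q := by
  have hf_star : star (q * star q) = q * star q := star_e q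
  have hf_idem : π (q * star q) * π (q * star q) = π (q * star q) :=
    pidem π hπ2 hπ3 _ hf_star (e_idem hinv q)
  have hq : π q * π (star q) = π (q * star q) * (π q * π (star q)) := by
    rw [← mul_assoc, pd2 π hπ2 hπ3]
  have hstar1 : star (star p * (q * star q)) = (q * star q) * p := by
    rw [star_mul, star_star, hf_star]
  have h3x : π (star p * (q * star q)) * (π q * π (star q)) =
      π (star p * (q * star q)) * (π ((q * star q) * p) *
        (π (star p * (q * star q)) * (π q * π (star q)))) := by
    have h := hπ3 (star p * (q * star q))
    rw [hstar1] at h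
    conv_lhs => rw [← h]
    simp only [mul_assoc]
  have hstep4 : ∀ c : B, π p * (π (star p * (q * star q)) * (π ((q * star q) * p) * c)) =
      π (p * (star p * (q * star q))) * (π ((q * star q) * p) * c) := by
    intro c
    have h2 := hπ2 p (star p * (q * star q))
    rw [hstar1] at h2
    rw [← mul_assoc, ← mul_assoc, h2, mul_assoc]
  have hgS : p * (star p * (q * star q)) = ((q * star q) * p) * star ((q * star q) * p) := by
    rw [star_mul, hf_star]
    calc p * (star p * (q * star q))
        = (p * star p) * (q * star q) := (mul_assoc _ _ _).symm
      _ = (p * star p) * ((q * star q) * (q * star q)) := by rw [e_idem hinv q]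
      _ = ((p * star p) * (q * star q)) * (q * star q) := (mul_assoc _ _ _).symm
      _ = ((q * star q) * (p * star p)) * (q * star q) := by rw [hcomm p q]
      _ = ((q * star q) * p) * (star p * (q * star q)) := by simp only [mul_assoc]
  simp only [eps]
  rw [show star (q * star q * p) = star p * (q * star q) by rw [star_mul, hf_star]]
  conv_lhs => simp only [mul_assoc]
  conv_rhs => rw [mul_assoc]
  conv_lhs => rw [hq]
  rw [pd6c π hπ2 _ hf_star hf_idem (star p)]
  conv_lhs => rw [← hq]
  conv_lhs => rw [h3x]
  rw [hstep4]
  rw [hgS]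
  rw [pd2c π hπ2 hπ3 ((q * star q) * p)]

private lemma L_Mop (hinv : ∀ s : S, s * star s * s = s)
    (hcomm : ∀ s t : S, (s * star s) * (t * star t) = (t * star t) * (s * star s))
    (hπ1 : ∀ s t : S, π (star s) * π s * π t = π (star s) * π (s * t))
    (hπ2 : ∀ s t : S, π s * π t * π (star t) = π (s * t) * π (star t))
    (hπ3 : ∀ s : S, π s * π (star s) * π s = π s)
    (a b : S) :
    eps π a * eps π b = eps π a * eps π (a * star a * b) := by
  set π' : S → Bᵐᵒᵖ := fun s => MulOpposite.op (π (star s)) with hπ'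
  have h1' : ∀ s t : S, π' (star s) * π' s * π' t = π' (star s) * π' (s * t) := by
    intro s t
    apply MulOpposite.unop_injective
    simp only [hπ', MulOpposite.unop_mul, MulOpposite.unop_op, star_star]
    rw [star_mul, ← mul_assoc]
    have h := hπ2 (star t) (star s)
    rwa [star_star] at h
  have h2' : ∀ s t : S, π' s * π' t * π' (star t) = π' (s * t) * π' (star t) := by
    intro s t
    apply MulOpposite.unop_injective
    simp only [hπ', MulOpposite.unop_mul, MulOpposite.unop_op, star_star]
    rw [star_mul, ← mul_assoc]
    exact pd1 π hπ1 t (star s)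
  have h3' : ∀ s : S, π' s * π' (star s) * π' s = π' s := by
    intro s
    apply MulOpposite.unop_injective
    simp only [hπ', MulOpposite.unop_mul, MulOpposite.unop_op, star_star]
    rw [← mul_assoc]
    have h := hπ3 (star s)
    rwa [star_star] at h
  have hop : ∀ x : S, eps π' x = MulOpposite.op (eps π x) := by
    intro x
    simp only [eps, hπ', star_star, ← MulOpposite.op_mul]
  have hM := L_M π' hinv hcomm h1' h2' h3' b a
  simp only [hop] at hM
  rw [← MulOpposite.op_mul, ← MulOpposite.op_mul] at hM
  exact MulOpposite.op_injective hM

private lemma L_SR (hinv : ∀ s : S, s * star s * s = s)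
    (hπ1 : ∀ s t : S, π (star s) * π s * π t = π (star s) * π (s * t))
    (hπ2 : ∀ s t : S, π s * π t * π (star t) = π (s * t) * π (star t))
    (hπ3 : ∀ s : S, π s * π (star s) * π s = π s)
    (r r' : S) (hr : r * star r = r' * star r') :
    eps π r * eps π r' = eps π r' * eps π r := by
  have h_ru : r * (star r * r') = r' := by
    rw [← mul_assoc, hr]; exact hinv r'
  have h_u2 : star r' * r * star r = star r' := by
    rw [mul_assoc, hr, ← mul_assoc]
    have h := hinv (star r')
    rwa [star_star] at h
  have hsu : star (star r * r') = star r' * r := by rw [star_mul, star_star]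
  have hmid : π (star r * r') * π (star r') =
      π (star r * r') * (π (star (star r * r')) * π (star r)) := by
    have h := pd1 π hπ1 (star r * r') (star r)
    rw [mul_assoc] at h
    rw [h, hsu, h_u2]
  have key : eps π r * eps π r' = π r * eps π (star r * r') * π (star r) := by
    simp only [eps]
    conv_lhs => rw [mul_assoc]
    rw [pd1c π hπ1 r r' (π (star r'))]
    conv_lhs => rw [hmid]
    conv_rhs => simp only [mul_assoc]
  rw [key, L_C π hπ2 hπ3 r (star r * r'), h_ru]

private lemma hrS (hinv : ∀ s : S, s * star s * s = s)
    (hcomm : ∀ s t : S, (s * star s) * (t * star t) = (t * star t) * (s * star s))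
    (p q : S) :
    (q * star q * p) * star (q * star q * p) = (p * star p) * (q * star q) := by
  have h1 : star (q * star q * p) = star p * (q * star q) := by
    rw [star_mul, star_e]
  rw [h1]
  calc (q * star q * p) * (star p * (q * star q))
      = (q * star q) * ((p * star p) * (q * star q)) := by simp only [mul_assoc]
    _ = (q * star q) * ((q * star q) * (p * star p)) := by rw [hcomm p q]
    _ = ((q * star q) * (q * star q)) * (p * star p) := (mul_assoc _ _ _).symm
    _ = (q * star q) * (p * star p) := by rw [e_idem hinv q]
    _ = (p * star p) * (q * star q) := hcomm q p

private lemma hrS2 (hinv : ∀ s : S, s * star s * s = s)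
    (hcomm : ∀ s t : S, (s * star s) * (t * star t) = (t * star t) * (s * star s))
    (p q : S) :
    ((q * star q * p) * star (q * star q * p) * q) *
      star ((q * star q * p) * star (q * star q * p) * q) =
      (q * star q * p) * star (q * star q * p) := by
  rw [star_mul ((q * star q * p) * star (q * star q * p)) q, star_e (q * star q * p)]
  rw [hrS hinv hcomm p q]
  calc ((p * star p) * (q * star q) * q) * (star q * ((p * star p) * (q * star q)))
      = ((p * star p) * (q * star q)) * ((q * star q) * ((p * star p) * (q * star q))) := by
        simp only [mul_assoc]
    _ = ((p * star p) * (q * star q)) * (((q * star q) * (p * star p)) * (q * star q)) := by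
        simp only [mul_assoc]
    _ = ((p * star p) * (q * star q)) * (((p * star p) * (q * star q)) * (q * star q)) := by
        rw [show (q * star q) * (p * star p) = (p * star p) * (q * star q) from hcomm q p]
    _ = ((p * star p) * (q * star q)) * ((p * star p) * ((q * star q) * (q * star q))) := by
        simp only [mul_assoc]
    _ = ((p * star p) * (q * star q)) * ((p * star p) * (q * star q)) := by
        rw [e_idem hinv q]
    _ = (p * star p) * (((q * star q) * (p * star p)) * (q * star q)) := by
        simp only [mul_assoc]
    _ = (p * star p) * (((p * star p) * (q * star q)) * (q * star q)) := by
        rw [show (q * star q) * (p * star p) = (p * star p) * (q * star q) from hcomm q p]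
    _ = ((p * star p) * (p * star p)) * ((q * star q) * ((q * star q))) := by
        simp only [mul_assoc]
    _ = (p * star p) * (q * star q) := by rw [e_idem hinv p, e_idem hinv q]

private lemma L_comm (hinv : ∀ s : S, s * star s * s = s)
    (hcomm : ∀ s t : S, (s * star s) * (t * star t) = (t * star t) * (s * star s))
    (hπ1 : ∀ s t : S, π (star s) * π s * π t = π (star s) * π (s * t))
    (hπ2 : ∀ s t : S, π s * π t * π (star t) = π (s * t) * π (star t))
    (hπ3 : ∀ s : S, π s * π (star s) * π s = π s)
    (p q : S) : eps π p * eps π q = eps π q * eps π p := by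
  have hr : ((q * star q * p) * star (q * star q * p) * q) *
      star ((q * star q * p) * star (q * star q * p) * q) =
      (q * star q * p) * star (q * star q * p) := hrS2 hinv hcomm p q
  have M1 : eps π p * eps π q = eps π (q * star q * p) * eps π q :=
    L_M π hinv hcomm hπ1 hπ2 hπ3 p q
  have M4 : eps π (q * star q * p) * eps π q =
      eps π (q * star q * p) * eps π ((q * star q * p) * star (q * star q * p) * q) :=
    L_Mop π hinv hcomm hπ1 hπ2 hπ3 (q * star q * p) q
  have M2 : eps π q * eps π p = eps π q * eps π (q * star q * p) :=
    L_Mop π hinv hcomm hπ1 hπ2 hπ3 q p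
  have M3 : eps π q * eps π (q * star q * p) =
      eps π ((q * star q * p) * star (q * star q * p) * q) * eps π (q * star q * p) :=
    L_M π hinv hcomm hπ1 hπ2 hπ3 q (q * star q * p)
  have SR : eps π ((q * star q * p) * star (q * star q * p) * q) * eps π (q * star q * p) =
      eps π (q * star q * p) * eps π ((q * star q * p) * star (q * star q * p) * q) :=
    L_SR π hinv hπ1 hπ2 hπ3 _ _ hr
  rw [M1, M4, M2, M3, SR]

end PR

section Main

variable {S : Type*} [Semigroup S] [StarMul S] {K : Type*} [CommRing K]
  {B : Type*} [Ring B] [Algebra K B] (π : S → B)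

private lemma memA (u : S) :
    eps π u ∈ NonUnitalAlgebra.adjoin K (Set.range (eps π)) :=
  NonUnitalAlgebra.subset_adjoin K ⟨u, rfl⟩

private lemma L_commA (hinv : ∀ s : S, s * star s * s = s)
    (hcomm : ∀ s t : S, (s * star s) * (t * star t) = (t * star t) * (s * star s))
    (hπ1 : ∀ s t : S, π (star s) * π s * π t = π (star s) * π (s * t))
    (hπ2 : ∀ s t : S, π s * π t * π (star t) = π (s * t) * π (star t))
    (hπ3 : ∀ s : S, π s * π (star s) * π s = π s)
    (u : S) {a : B} (ha : a ∈ NonUnitalAlgebra.adjoin K (Set.range (eps π))) :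
    eps π u * a = a * eps π u := by
  induction ha using NonUnitalAlgebra.adjoin_induction with
  | mem x hx =>
      obtain ⟨v, rfl⟩ := hx
      exact L_comm π hinv hcomm hπ1 hπ2 hπ3 u v
  | add x y hx hy ihx ihy => rw [mul_add, add_mul, ihx, ihy]
  | zero => rw [mul_zero, zero_mul]
  | mul x y hx hy ihx ihy => rw [← mul_assoc, ihx, mul_assoc, ihy, ← mul_assoc]
  | smul r x hx ihx => rw [mul_smul_comm, ihx, smul_mul_assoc]

private lemma epsConjMul (hinv : ∀ s : S, s * star s * s = s)
    (hcomm : ∀ s t : S, (s * star s) * (t * star t) = (t * star t) * (s * star s))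
    (hπ1 : ∀ s t : S, π (star s) * π s * π t = π (star s) * π (s * t))
    (hπ2 : ∀ s t : S, π s * π t * π (star t) = π (s * t) * π (star t))
    (hπ3 : ∀ s : S, π s * π (star s) * π s = π s)
    (u : S) {a : B} (ha : a ∈ NonUnitalAlgebra.adjoin K (Set.range (eps π))) (b : B) :
    (π u * a * π (star u)) * (π u * b * π (star u)) = π u * (a * b) * π (star u) := by
  have habs : π u * eps π (star u) = π u := by
    simp only [eps, star_star]
    rw [← mul_assoc]
    exact hπ3 u
  have hcomm' : a * eps π (star u) = eps π (star u) * a :=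
    (L_commA π hinv hcomm hπ1 hπ2 hπ3 (star u) ha).symm
  calc (π u * a * π (star u)) * (π u * b * π (star u))
      = π u * (a * (π (star u) * π u * b)) * π (star u) := by simp only [mul_assoc]
    _ = π u * (a * (eps π (star u) * b)) * π (star u) := by
        rw [show π (star u) * π u = eps π (star u) from by simp only [eps, star_star]]
    _ = π u * ((a * eps π (star u)) * b) * π (star u) := by
        rw [mul_assoc a (eps π (star u)) b]
    _ = π u * ((eps π (star u) * a) * b) * π (star u) := by rw [hcomm']
    _ = π u * (eps π (star u) * (a * b)) * π (star u) := by
        rw [mul_assoc (eps π (star u)) a b]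
    _ = (π u * eps π (star u)) * (a * b) * π (star u) := by
        rw [← mul_assoc (π u) (eps π (star u)) (a * b)]
    _ = π u * (a * b) * π (star u) := by rw [habs]

private lemma epsConjMem (hinv : ∀ s : S, s * star s * s = s)
    (hcomm : ∀ s t : S, (s * star s) * (t * star t) = (t * star t) * (s * star s))
    (hπ1 : ∀ s t : S, π (star s) * π s * π t = π (star s) * π (s * t))
    (hπ2 : ∀ s t : S, π s * π t * π (star t) = π (s * t) * π (star t))
    (hπ3 : ∀ s : S, π s * π (star s) * π s = π s)
    (u : S) {a : B} (ha : a ∈ NonUnitalAlgebra.adjoin K (Set.range (eps π))) :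
    π u * a * π (star u) ∈ NonUnitalAlgebra.adjoin K (Set.range (eps π)) := by
  induction ha using NonUnitalAlgebra.adjoin_induction with
  | mem x hx =>
      obtain ⟨v, rfl⟩ := hx
      rw [L_C π hπ2 hπ3 u v]
      exact mul_mem (memA π (u * v)) (memA π u)
  | add x y hx hy ihx ihy =>
      rw [mul_add, add_mul]
      exact add_mem ihx ihy
  | zero =>
      rw [mul_zero, zero_mul]
      exact zero_mem _
  | mul x y hx hy ihx ihy =>
      rw [← epsConjMul π hinv hcomm hπ1 hπ2 hπ3 u hx y]
      exact mul_mem ihx ihy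
  | smul r x hx ihx =>
      rw [mul_smul_comm, smul_mul_assoc]
      exact SMulMemClass.smul_mem r ihx

end Main

theorem conj_image_eq
    {S : Type*} [Semigroup S] [StarMul S]
    (hinv : ∀ s : S, s * star s * s = s)
    (hcomm : ∀ s t : S, (s * star s) * (t * star t) = (t * star t) * (s * star s))
    {K : Type*} [CommRing K] {B : Type*} [Ring B] [Algebra K B]
    (π : S → B)
    (hπ1 : ∀ s t : S, π (star s) * π s * π t = π (star s) * π (s * t))
    (hπ2 : ∀ s t : S, π s * π t * π (star t) = π (s * t) * π (star t))
    (hπ3 : ∀ s : S, π s * π (star s) * π s = π s)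
    (s t : S) :
    (fun a => π s * a * π (star s)) '' (Xset K π (star s) ∩ Xset K π t) =
      Xset K π s ∩ Xset K π (s * t) := by
  have hC := L_C π hπ2 hπ3
  have hCo := L_comm π hinv hcomm hπ1 hπ2 hπ3
  have hCM := fun (u : S) {a : B} ha b =>
    epsConjMul π hinv hcomm hπ1 hπ2 hπ3 u (a := a) (K := K) ha b
  have hMem := fun (u : S) {a : B} ha =>
    epsConjMem π hinv hcomm hπ1 hπ2 hπ3 u (a := a) (K := K) ha
  have hCM' : ∀ {a : B}, a ∈ NonUnitalAlgebra.adjoin K (Set.range (eps π)) → ∀ b : B,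
      (π (star s) * a * π s) * (π (star s) * b * π s) = π (star s) * (a * b) * π s := by
    intro a ha b
    have h := hCM (star s) ha b
    rwa [star_star] at h
  have hMem' : ∀ {a : B}, a ∈ NonUnitalAlgebra.adjoin K (Set.range (eps π)) →
      π (star s) * a * π s ∈ NonUnitalAlgebra.adjoin K (Set.range (eps π)) := by
    intro a ha
    have h := hMem (star s) ha
    rwa [star_star] at h
  have hC' : ∀ u : S, π (star s) * eps π u * π s = eps π (star s * u) * eps π (star s) := by
    intro u
    have h := hC (star s) u
    rwa [star_star] at h
  ext y
  simp only [Set.mem_image, Set.mem_inter_iff, Xset, Set.mem_setOf_eq]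
  constructor
  · rintro ⟨x, ⟨⟨c, hc, rfl⟩, ⟨c', hc', hxc'⟩⟩, rfl⟩
    constructor
    · refine ⟨eps π (s * star s) * (π s * c * π (star s)),
        mul_mem (memA π (s * star s)) (hMem s hc), ?_⟩
      rw [← hCM s (memA π (star s)) c, hC s (star s), hCo (s * star s) s, mul_assoc]
    · refine ⟨eps π s * (π s * c' * π (star s)),
        mul_mem (memA π s) (hMem s hc'), ?_⟩
      rw [hxc', ← hCM s (memA π t) c', hC s t, mul_assoc]
  · rintro ⟨⟨d, hd, rfl⟩, ⟨d', hd', hyd'⟩⟩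
    refine ⟨π (star s) * (eps π s * d) * π s, ⟨?_, ?_⟩, ?_⟩
    · refine ⟨eps π (star s * s) * (π (star s) * d * π s),
        mul_mem (memA π (star s * s)) (hMem' hd), ?_⟩
      rw [← hCM' (memA π s) d, hC' s, hCo (star s * s) (star s), mul_assoc]
    · refine ⟨eps π (star s) * (π (star s) * d' * π s),
        mul_mem (memA π (star s)) (hMem' hd'), ?_⟩
      have claim : eps π (star s * (s * t)) * eps π (star s) = eps π t * eps π (star s) := by
        have hdag := L_dag π hπ1 hπ2 hπ3 (star s) t
        rw [star_star] at hdag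
        rw [show star s * (s * t) = star s * s * t from (mul_assoc _ _ _).symm, ← hdag,
          mul_assoc, hCo t (star s), ← mul_assoc, L_idem π hπ3 (star s), hCo (star s) t]
      rw [hyd', ← hCM' (memA π (s * t)) d', hC' (s * t), claim, mul_assoc]
    · have h1 : π s * (π (star s) * (eps π s * d) * π s) * π (star s) =
          eps π s * (eps π s * d) * eps π s := by
        simp only [eps, mul_assoc]
      rw [h1, ← mul_assoc, L_idem π hπ3 s, mul_assoc,
        ← L_commA π hinv hcomm hπ1 hπ2 hπ3 s hd, ← mul_assoc, L_idem π hπ3 s]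
end

section
/- With notation as below, for all s, t ∈ S and every a ∈ α_t^{-1}(X_t ∩ X_{s*}), one has α_s(α_t(a)) = α_{st}(a); hence the maps α_s define a partial action of S on A. -/
section SAux
variable {S : Type*} [Semigroup S] [StarMul S]

lemma sEE (hinv : ∀ s : S, s * star s * s = s) (x : S) :
    (x * star x) * (x * star x) = x * star x := by
  rw [← mul_assoc, hinv]

lemma sI1 (hinv : ∀ s : S, s * star s * s = s)
    (hcomm : ∀ s t : S, (s * star s) * (t * star t) = (t * star t) * (s * star s))
    (x y : S) :
    (x * star x * y) * star (x * star x * y) = (x * star x) * (y * star y) := by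
  rw [star_mul, star_mul, star_star]
  calc (x * star x * y) * (star y * (x * star x))
      = (x * star x) * ((y * star y) * (x * star x)) := by simp only [mul_assoc]
    _ = (x * star x) * ((x * star x) * (y * star y)) := by rw [hcomm]
    _ = ((x * star x) * (x * star x)) * (y * star y) := by simp only [mul_assoc]
    _ = (x * star x) * (y * star y) := by rw [sEE hinv x]

omit [StarMul S] in
lemma idm1 (e f x : S) (hf : f * f = f) : (e * f) * (f * x) = (e * f) * x := by
  rw [mul_assoc, ← mul_assoc f f x, hf, ← mul_assoc]

omit [StarMul S] in
lemma idm2 (e f y : S) (he : e * e = e) (hc : f * e = e * f) (hfy : f * y = y) :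
    (e * f) * (e * y) = e * y := by
  rw [mul_assoc, ← mul_assoc f e y, hc, mul_assoc e f y, ← mul_assoc, ← mul_assoc, he,
    mul_assoc, hfy]

omit [StarMul S] in
lemma idmP (e f : S) (he : e * e = e) (hf : f * f = f) (hc : f * e = e * f) :
    (e * f) * (e * f) = e * f := by
  rw [mul_assoc, ← mul_assoc f e f, hc, mul_assoc e f f, hf, ← mul_assoc, he]

omit [StarMul S] in
lemma idm5 (e f x x' : S) (hx : x * x' = e) (he : e * e = e) (hf : f * f = f)
    (hc : f * e = e * f) :
    ((e * f) * x) * (x' * (f * e)) = e * f := by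
  calc ((e * f) * x) * (x' * (f * e))
      = (e * f) * ((x * x') * (f * e)) := by simp only [mul_assoc]
    _ = (e * f) * (e * (f * e)) := by rw [hx]
    _ = (e * f) * (e * (e * f)) := by rw [hc]
    _ = (e * f) * ((e * e) * f) := by simp only [mul_assoc]
    _ = (e * f) * (e * f) := by rw [he]
    _ = e * f := idmP e f he hf hc

end SAux

section Aux
variable {S : Type*} [Semigroup S] [StarMul S] {B : Type*} [Ring B] (π : S → B)

lemma hp1t (hπ1 : ∀ s t : S, π (star s) * π s * π t = π (star s) * π (s * t))
    (u v : S) (x : B) :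
    π u * (π (star u) * (π v * x)) = π u * (π (star u * v) * x) := by
  have h := hπ1 (star u) v
  rw [star_star] at h
  simp only [← mul_assoc]
  rw [h]

lemma hp1 (hπ1 : ∀ s t : S, π (star s) * π s * π t = π (star s) * π (s * t))
    (u v : S) :
    π u * (π (star u) * π v) = π u * π (star u * v) := by
  have h := hπ1 (star u) v
  rw [star_star] at h
  rw [← mul_assoc, h]

lemma hp2t (hπ2 : ∀ s t : S, π s * π t * π (star t) = π (s * t) * π (star t))
    (u v : S) (x : B) :
    π u * (π v * (π (star v) * x)) = π (u * v) * (π (star v) * x) := by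
  have h := hπ2 u v
  simp only [← mul_assoc]
  rw [h]

lemma hp3e (hπ3 : ∀ s : S, π s * π (star s) * π s = π s) (u : S) :
    π u = π u * (π (star u) * π u) := by
  rw [← mul_assoc, hπ3]

lemma skey1 (hinv : ∀ s : S, s * star s * s = s)
    (hcomm : ∀ s t : S, (s * star s) * (t * star t) = (t * star t) * (s * star s))
    (a b : S) :
    (star b * a) * ((star a * b) * star b) = star b * (a * star a) := by
  have h := hinv (star b)
  rw [star_star] at h
  calc (star b * a) * ((star a * b) * star b)
      = star b * ((a * star a) * (b * star b)) := by simp only [mul_assoc]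
    _ = star b * ((b * star b) * (a * star a)) := by rw [hcomm]
    _ = (star b * b * star b) * (a * star a) := by simp only [mul_assoc]
    _ = star b * (a * star a) := by rw [h]

lemma L1 (hinv : ∀ s : S, s * star s * s = s)
    (hcomm : ∀ s t : S, (s * star s) * (t * star t) = (t * star t) * (s * star s))
    (hπ1 : ∀ s t : S, π (star s) * π s * π t = π (star s) * π (s * t))
    (hπ2 : ∀ s t : S, π s * π t * π (star t) = π (s * t) * π (star t))
    (hπ3 : ∀ s : S, π s * π (star s) * π s = π s)
    (a b : S) :
    eps π a * eps π b = eps π (a * star a * b) * eps π (b * star b * a) := by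
  have h2 := hp3e π hπ3 (star a * b)
  rw [star_mul, star_star] at h2
  have h3 := hp1 π hπ1 (star b * a) (star b)
  rw [star_mul, star_star] at h3
  have h4 := hp2t π hπ2 a (star a * b) (π (star a * b * star b))
  rw [star_mul, star_star] at h4
  have h5 := hp3e π hπ3 (star a * b * star b)
  rw [star_mul, star_mul, star_star, star_star] at h5
  have h6 := hp2t π hπ2 (star b * a) (star a * b * star b) (π (star a * b * star b))
  rw [star_mul, star_mul, star_star, star_star] at h6
  calc eps π a * eps π b
      = π a * (π (star a) * (π b * π (star b))) := by simp only [eps, mul_assoc]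
    _ = π a * (π (star a * b) * π (star b)) := hp1t π hπ1 a b (π (star b))
    _ = π a * (π (star a * b) * (π (star b * a) * (π (star a * b) * π (star b)))) := by
        conv_lhs => rw [h2]
        simp only [mul_assoc]
    _ = π a * (π (star a * b) * (π (star b * a) * π (star a * b * star b))) := by
        rw [h3]
    _ = π (a * (star a * b)) * (π (star b * a) * π (star a * b * star b)) := h4
    _ = π (a * (star a * b)) *
          (π (star b * a) * (π (star a * b * star b) *
            (π (b * (star b * a)) * π (star a * b * star b)))) := by
        conv_lhs => rw [h5]
    _ = π (a * (star a * b)) *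
          (π (star b * a * (star a * b * star b)) *
            (π (b * (star b * a)) * π (star a * b * star b))) := by
        rw [h6]
    _ = π (a * (star a * b)) *
          (π (star b * (a * star a)) *
            (π (b * (star b * a)) * π (star a * b * star b))) := by
        rw [show star b * a * (star a * b * star b) = star b * (a * star a) by
          have := skey1 hinv hcomm a b; simpa [mul_assoc] using this]
    _ = eps π (a * star a * b) * eps π (b * star b * a) := by
        simp only [eps, star_mul, star_star, mul_assoc]

lemma eps_comm (hinv : ∀ s : S, s * star s * s = s)
    (hcomm : ∀ s t : S, (s * star s) * (t * star t) = (t * star t) * (s * star s))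
    (hπ1 : ∀ s t : S, π (star s) * π s * π t = π (star s) * π (s * t))
    (hπ2 : ∀ s t : S, π s * π t * π (star t) = π (s * t) * π (star t))
    (hπ3 : ∀ s : S, π s * π (star s) * π s = π s)
    (s t : S) : eps π s * eps π t = eps π t * eps π s := by
  have L1' := L1 π hinv hcomm hπ1 hπ2 hπ3
  have he := sEE hinv s
  have hf := sEE hinv t
  have hc := hcomm t s
  have h1 : eps π s * eps π t =
      eps π (((s * star s) * (t * star t)) * s) * eps π ((s * star s) * t) := by
    calc eps π s * eps π t
        = eps π (s * star s * t) * eps π (t * star t * s) := L1' s t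
      _ = eps π ((s * star s * t) * star (s * star s * t) * (t * star t * s)) *
            eps π ((t * star t * s) * star (t * star t * s) * (s * star s * t)) :=
          L1' (s * star s * t) (t * star t * s)
      _ = eps π (((s * star s) * (t * star t)) * ((t * star t) * s)) *
            eps π (((s * star s) * (t * star t)) * ((s * star s) * t)) := by
          rw [sI1 hinv hcomm s t, sI1 hinv hcomm t s, hcomm t s]
      _ = eps π (((s * star s) * (t * star t)) * s) * eps π ((s * star s) * t) := by
          rw [idm1 _ _ _ hf, idm2 _ _ _ he hc (hinv t)]
  have h2 : eps π (((s * star s) * (t * star t)) * s) * eps π ((s * star s) * t) =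
      eps π ((s * star s) * t) * eps π (((s * star s) * (t * star t)) * s) := by
    calc eps π (((s * star s) * (t * star t)) * s) * eps π ((s * star s) * t)
        = eps π ((((s * star s) * (t * star t)) * s) *
              star ((((s * star s) * (t * star t))) * s) * ((s * star s) * t)) *
            eps π (((s * star s) * t) * star ((s * star s) * t) *
              ((((s * star s) * (t * star t))) * s)) :=
          L1' _ _
      _ = eps π (((s * star s) * (t * star t)) * ((s * star s) * t)) *
            eps π (((s * star s) * (t * star t)) * (((s * star s) * (t * star t)) * s)) := by
          rw [star_mul ((s * star s) * (t * star t)) s, star_mul (s * star s) (t * star t),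
            star_mul s (star s), star_mul t (star t), star_star, star_star,
            idm5 _ _ _ _ rfl he hf hc]
          rw [sI1 hinv hcomm s t]
      _ = eps π ((s * star s) * t) * eps π (((s * star s) * (t * star t)) * s) := by
          rw [idm2 _ _ _ he hc (hinv t), ← mul_assoc, idmP _ _ he hf hc]
  have h3 : eps π t * eps π s =
      eps π ((s * star s) * t) * eps π (((s * star s) * (t * star t)) * s) := by
    calc eps π t * eps π s
        = eps π (t * star t * s) * eps π (s * star s * t) := L1' t s
      _ = eps π ((t * star t * s) * star (t * star t * s) * (s * star s * t)) *
            eps π ((s * star s * t) * star (s * star s * t) * (t * star t * s)) :=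
          L1' _ _
      _ = eps π (((s * star s) * (t * star t)) * ((s * star s) * t)) *
            eps π (((s * star s) * (t * star t)) * ((t * star t) * s)) := by
          rw [sI1 hinv hcomm s t, sI1 hinv hcomm t s, hcomm t s]
      _ = eps π ((s * star s) * t) * eps π (((s * star s) * (t * star t)) * s) := by
          rw [idm1 _ _ _ hf, idm2 _ _ _ he hc (hinv t)]
  exact h1.trans (h2.trans h3.symm)

lemma eps_adjoin_comm {K : Type*} [CommRing K] [Algebra K B]
    (hcb : ∀ u v : S, eps π u * eps π v = eps π v * eps π u)
    (u : S) {c : B} (hc : c ∈ NonUnitalAlgebra.adjoin K (Set.range (eps π))) :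
    eps π u * c = c * eps π u := by
  induction hc using NonUnitalAlgebra.adjoin_induction with
  | mem x hx => obtain ⟨v, rfl⟩ := hx; exact hcb u v
  | add x y hx hy ihx ihy => rw [mul_add, add_mul, ihx, ihy]
  | zero => simp
  | mul x y hx hy ihx ihy => rw [← mul_assoc, ihx, mul_assoc, ihy, ← mul_assoc]
  | smul r x hx ihx => rw [mul_smul_comm, ihx, smul_mul_assoc]

end Aux
theorem conj_comp
    {S : Type*} [Semigroup S] [StarMul S]
    (hinv : ∀ s : S, s * star s * s = s)
    (hcomm : ∀ s t : S, (s * star s) * (t * star t) = (t * star t) * (s * star s))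
    {K : Type*} [CommRing K] {B : Type*} [Ring B] [Algebra K B]
    (π : S → B)
    (hπ1 : ∀ s t : S, π (star s) * π s * π t = π (star s) * π (s * t))
    (hπ2 : ∀ s t : S, π s * π t * π (star t) = π (s * t) * π (star t))
    (hπ3 : ∀ s : S, π s * π (star s) * π s = π s)
    (s t : S) :
    ∀ a ∈ Xset K π (star t),
      π t * a * π (star t) ∈ Xset K π t ∩ Xset K π (star s) →
      π s * (π t * a * π (star t)) * π (star s) = π (s * t) * a * π (star (s * t)) := by
  intro a ha hy
  obtain ⟨c, hc, rfl⟩ := ha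
  obtain ⟨⟨d, hd, hyd⟩, -⟩ := hy
  have hcb := eps_comm π hinv hcomm hπ1 hπ2 hπ3
  have hcomc : ∀ (u : S) (x : B), x ∈ NonUnitalAlgebra.adjoin K (Set.range (eps π)) →
      eps π u * x = x * eps π u := fun u x hx => eps_adjoin_comm π hcb u hx
  have epsT : eps π (star t) = π (star t) * π t := by rw [eps, star_star]
  have epsidT : eps π t * eps π t = eps π t := by
    simp only [eps]
    rw [← mul_assoc, hπ3]
  have F1 : π t * (eps π (star t) * c) = π t * c := by
    rw [epsT]
    calc π t * (π (star t) * π t * c) = (π t * π (star t) * π t) * c := by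
          simp only [mul_assoc]
      _ = π t * c := by rw [hπ3 t]
  have F2 : (π t * (eps π (star t) * c) * π (star t)) * π t = π t * c := by
    rw [F1]
    calc (π t * c) * π (star t) * π t = π t * (c * (π (star t) * π t)) := by
          simp only [mul_assoc]
      _ = π t * (c * eps π (star t)) := by rw [← epsT]
      _ = π t * (eps π (star t) * c) := by rw [hcomc (star t) c hc]
      _ = π t * c := F1
  have G : π t * (π (star t) * (π t * c)) = π t * c := by
    simp only [← mul_assoc]
    rw [hπ3]
  have F3 : π (s * t) * (eps π (star t) * c) = π s * (π t * c) := by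
    calc π (s * t) * (eps π (star t) * c)
        = (π (s * t) * π (star t)) * (π t * c) := by rw [epsT]; simp only [mul_assoc]
      _ = (π s * π t * π (star t)) * (π t * c) := by rw [← hπ2 s t]
      _ = π s * (π t * (π (star t) * (π t * c))) := by simp only [mul_assoc]
      _ = π s * (π t * c) := by rw [G]
  have F4 : π t * (π (star t) * π (star s)) = π t * π (star t * star s) :=
    hp1 π hπ1 t (star s)
  have F5 : (π t * (eps π (star t) * c) * π (star t)) * eps π t =
      π t * (eps π (star t) * c) * π (star t) := by
    rw [hyd]
    calc (eps π t * d) * eps π t = eps π t * (d * eps π t) := mul_assoc _ _ _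
      _ = eps π t * (eps π t * d) := by rw [← hcomc t d hd]
      _ = (eps π t * eps π t) * d := (mul_assoc _ _ _).symm
      _ = eps π t * d := by rw [epsidT]
  have main : π (s * t) * (eps π (star t) * c) * π (star (s * t)) =
      π s * (π t * (eps π (star t) * c) * π (star t)) * π (star s) := by
    calc π (s * t) * (eps π (star t) * c) * π (star (s * t))
        = (π s * (π t * c)) * π (star t * star s) := by rw [F3, star_mul]
      _ = (π s * ((π t * (eps π (star t) * c) * π (star t)) * π t)) *
            π (star t * star s) := by rw [F2]
      _ = π s * ((π t * (eps π (star t) * c) * π (star t)) *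
            (π t * π (star t * star s))) := by simp only [mul_assoc]
      _ = π s * ((π t * (eps π (star t) * c) * π (star t)) *
            (π t * (π (star t) * π (star s)))) := by rw [← F4]
      _ = π s * (((π t * (eps π (star t) * c) * π (star t)) * eps π t) *
            π (star s)) := by simp only [eps, mul_assoc]
      _ = π s * ((π t * (eps π (star t) * c) * π (star t)) * π (star s)) := by rw [F5]
      _ = π s * (π t * (eps π (star t) * c) * π (star t)) * π (star s) := by
          simp only [mul_assoc]
  exact main.symm
end

section
/- With notation as below, for all s, t ∈ S one has ε_{st} ε_s = α_s(ε_t ε_{s*}), where α_s is conjugation by π(s), π(s*). -/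
theorem eps_st_eps_s
    {S : Type*} [Semigroup S] [StarMul S]
    (hinv : ∀ s : S, s * star s * s = s)
    (hcomm : ∀ s t : S, (s * star s) * (t * star t) = (t * star t) * (s * star s))
    {K : Type*} [CommRing K] {B : Type*} [Ring B] [Algebra K B]
    (π : S → B)
    (hπ1 : ∀ s t : S, π (star s) * π s * π t = π (star s) * π (s * t))
    (hπ2 : ∀ s t : S, π s * π t * π (star t) = π (s * t) * π (star t))
    (hπ3 : ∀ s : S, π s * π (star s) * π s = π s)
    (s t : S) :
    eps π (s * t) * eps π s = π s * (eps π t * eps π (star s)) * π (star s) := by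
  have h1 := hπ2 s t
  have h2 := hπ2 (star t) (star s)
  rw [star_star] at h2
  simp only [eps, star_mul, star_star]
  calc π (s * t) * π (star t * star s) * (π s * π (star s))
      = π (s * t) * (π (star t * star s) * π s) * π (star s) := by
        simp only [mul_assoc]
    _ = π (s * t) * (π (star t) * π (star s) * π s) * π (star s) := by rw [← h2]
    _ = π (s * t) * π (star t) * π (star s) * π s * π (star s) := by
        simp only [mul_assoc]
    _ = π s * π t * π (star t) * π (star s) * π s * π (star s) := by rw [h1]
    _ = π s * (π t * π (star t) * (π (star s) * π s)) * π (star s) := by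
        simp only [mul_assoc]
end

section
/- In the universal semigroup Pr(S) of an inverse semigroup S, the elements e_s = [s][s*] are commuting idempotents, i.e. e_s e_s = e_s and e_s e_t = e_t e_s for all s, t ∈ S. -/
open FreeSemigroup

/-- The defining relations of the universal semigroup `Pr(S)`:
`[s*][s][t] = [s*][st]`, `[s][t][t*] = [st][t*]`, `[s][s*][s] = [s]`. -/
def prRel (S : Type*) [Semigroup S] [StarMul S] :
    FreeSemigroup S → FreeSemigroup S → Prop := fun x y =>
  (∃ s t : S, x = of (star s) * of s * of t ∧ y = of (star s) * of (s * t)) ∨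
  (∃ s t : S, x = of s * of t * of (star t) ∧ y = of (s * t) * of (star t)) ∨
  (∃ s : S, x = of s * of (star s) * of s ∧ y = of s)

/-- The universal semigroup `Pr(S)`, the quotient of the free semigroup on the
symbols `[s]`, `s ∈ S`, by the congruence generated by the relations above. -/
def PrS (S : Type*) [Semigroup S] [StarMul S] : Type _ :=
  (conGen (prRel S)).Quotient

instance (S : Type*) [Semigroup S] [StarMul S] : Semigroup (PrS S) :=
  inferInstanceAs (Semigroup (conGen (prRel S)).Quotient)

/-- The generator `[s]` of `Pr(S)`. -/
def brk {S : Type*} [Semigroup S] [StarMul S] (s : S) : PrS S :=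
  ((of s : FreeSemigroup S) : (conGen (prRel S)).Quotient)

section helpers

variable {S : Type*} [Semigroup S] [StarMul S]

lemma prS_rel {x y : FreeSemigroup S} (h : prRel S x y) :
    ((x : (conGen (prRel S)).Quotient) : PrS S) = (y : (conGen (prRel S)).Quotient) :=
  Con.eq _ |>.mpr (ConGen.Rel.of _ _ h)

lemma prS_r1 (x y : S) :
    brk (star x) * brk x * brk y = brk (star x) * brk (x * y) := by
  show ((of (star x) : FreeSemigroup S) : (conGen (prRel S)).Quotient) * of x * of y
      = ((of (star x) : FreeSemigroup S) : (conGen (prRel S)).Quotient) * of (x * y)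
  rw [← Con.coe_mul, ← Con.coe_mul, ← Con.coe_mul]
  exact prS_rel (Or.inl ⟨x, y, rfl, rfl⟩)

lemma prS_r2 (x y : S) :
    brk x * brk y * brk (star y) = brk (x * y) * brk (star y) := by
  show ((of x : FreeSemigroup S) : (conGen (prRel S)).Quotient) * of y * of (star y)
      = ((of (x * y) : FreeSemigroup S) : (conGen (prRel S)).Quotient) * of (star y)
  rw [← Con.coe_mul, ← Con.coe_mul, ← Con.coe_mul]
  exact prS_rel (Or.inr (Or.inl ⟨x, y, rfl, rfl⟩))

lemma prS_r3 (x : S) :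
    brk x * brk (star x) * brk x = brk x := by
  show ((of x : FreeSemigroup S) : (conGen (prRel S)).Quotient) * of (star x) * of x
      = ((of x : FreeSemigroup S) : (conGen (prRel S)).Quotient)
  rw [← Con.coe_mul, ← Con.coe_mul]
  exact prS_rel (Or.inr (Or.inr ⟨x, rfl, rfl⟩))

/-- right-associated, tailed version of R1. -/
lemma prS_r1t (x y : S) (z : PrS S) :
    brk (star x) * (brk x * (brk y * z)) = brk (star x) * (brk (x * y) * z) := by
  simp only [← mul_assoc]
  rw [prS_r1]

/-- R1 with `star (star x)` simplified. -/
lemma prS_r1t' (x y : S) (z : PrS S) :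
    brk x * (brk (star x) * (brk y * z)) = brk x * (brk (star x * y) * z) := by
  have := prS_r1t (star x) y z
  rwa [star_star] at this

lemma prS_r1n (x y : S) :
    brk (star x) * (brk x * brk y) = brk (star x) * brk (x * y) := by
  rw [← mul_assoc, prS_r1]

lemma prS_r2t (x y : S) (z : PrS S) :
    brk x * (brk y * (brk (star y) * z)) = brk (x * y) * (brk (star y) * z) := by
  simp only [← mul_assoc]
  rw [prS_r2]

lemma prS_r2n (x y : S) :
    brk x * (brk y * brk (star y)) = brk (x * y) * brk (star y) := by
  rw [← mul_assoc, prS_r2]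

lemma prS_r3t (x : S) (z : PrS S) :
    brk x * (brk (star x) * (brk x * z)) = brk x * z := by
  simp only [← mul_assoc]
  rw [prS_r3]

lemma prS_r3n (x : S) :
    brk x * (brk (star x) * brk x) = brk x := by
  rw [← mul_assoc, prS_r3]

/-- Reverse of R1 on a pair: `[p][q] = [p][p*][pq]` when `p*(pq) = q`. -/
lemma prS_m1r (p q : S) (h : star p * (p * q) = q) :
    brk p * brk q = brk p * (brk (star p) * brk (p * q)) := by
  have := prS_r1n (star p) (p * q)
  rw [star_star, h] at this
  exact this.symm

/-- Reverse of R2 on a pair, with tail: `[p][q]w = [pq][q*][q]w` when `(pq)q* = p`. -/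
lemma prS_m2r (p q : S) (h : p * q * star q = p) (z : PrS S) :
    brk p * (brk q * z) = brk (p * q) * (brk (star q) * (brk q * z)) := by
  have := prS_r2t (p * q) (star q) z
  rw [star_star, h] at this
  exact this.symm

end helpers

/-- In `Pr(S)` the elements `e_s = [s][s*]` are commuting idempotents. -/
theorem prS_idempotents_commute
    {S : Type*} [Semigroup S] [StarMul S]
    (hinv : ∀ s : S, s * star s * s = s)
    (hcomm : ∀ s t : S, (s * star s) * (t * star t) = (t * star t) * (s * star s))
    (s t : S) :
    (brk s * brk (star s)) * (brk s * brk (star s)) = brk s * brk (star s) ∧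
    (brk s * brk (star s)) * (brk t * brk (star t)) =
      (brk t * brk (star t)) * (brk s * brk (star s)) := by
  constructor
  · calc (brk s * brk (star s)) * (brk s * brk (star s))
        = brk s * (brk (star s) * (brk s * brk (star s))) := by simp only [mul_assoc]
      _ = brk s * brk (star s) := prS_r3t s (brk (star s))
  · -- abbreviations
    set u : S := star s * t with hu
    set v : S := star t * s with hv
    -- S-identities
    have hinvt : star t * t * star t = star t := by
      have := hinv (star t); rwa [star_star] at this
    have J5 : star (star u) * (star u * (u * star t)) = u * star t := by
      rw [star_star, ← mul_assoc, ← mul_assoc, hinv]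
    have Jd : (t * v) * star v * star (star v) = t * v := by
      rw [star_star, mul_assoc t v (star v), mul_assoc, hinv]
    have I1 : s * u = (t * v) * star v := by
      rw [hu, hv, star_mul, star_star, ← mul_assoc s (star s) t,
        ← mul_assoc t (star t) s, ← mul_assoc (t * star t * s) (star s) t,
        mul_assoc (t * star t) s (star s), ← hcomm s t,
        mul_assoc (s * star s) (t * star t) t, hinv t]
    have I2 : star u = star (star v) := by
      rw [hu, hv]; simp only [star_mul, star_star]
    have I3 : star (star u) = star v := by
      rw [hu, hv]; simp only [star_mul, star_star]
    have I4 : star u * (u * star t) = v * star s := by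
      rw [hu, hv]
      simp only [star_mul, star_star]
      simp only [← mul_assoc]
      rw [mul_assoc (star t) s (star s), mul_assoc ((star t) * (s * star s)) t (star t),
        mul_assoc (star t) (s * star s) (t * star t), hcomm s t,
        ← mul_assoc (star t) (t * star t) (s * star s), ← mul_assoc (star t) t (star t),
        hinvt, ← mul_assoc]
    -- the forward chain
    have F : (brk s * brk (star s)) * (brk t * brk (star t))
        = brk (s * u) * (brk (star u) * (brk (star (star u)) * brk (star u * (u * star t)))) := by
      calc (brk s * brk (star s)) * (brk t * brk (star t))
          = brk s * (brk (star s) * (brk t * brk (star t))) := by simp only [mul_assoc]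
        _ = brk s * (brk u * brk (star t)) := by rw [prS_r1t' s t (brk (star t)), ← hu]
        _ = brk s * ((brk u * (brk (star u) * brk u)) * brk (star t)) := by
            rw [prS_r3n u]
        _ = brk s * (brk u * (brk (star u) * (brk u * brk (star t)))) := by
            simp only [mul_assoc]
        _ = brk (s * u) * (brk (star u) * (brk u * brk (star t))) :=
            prS_r2t s u (brk u * brk (star t))
        _ = brk (s * u) * (brk (star u) * brk (u * star t)) := by rw [prS_r1n u (star t)]
        _ = brk (s * u) * (brk (star u) * (brk (star (star u)) * brk (star u * (u * star t)))) := by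
            rw [prS_m1r (star u) (u * star t) J5]
    -- the backward chain
    have B : (brk t * brk (star t)) * (brk s * brk (star s))
        = brk ((t * v) * star v) * (brk (star (star v)) * (brk (star v) * brk (v * star s))) := by
      calc (brk t * brk (star t)) * (brk s * brk (star s))
          = brk t * (brk (star t) * (brk s * brk (star s))) := by simp only [mul_assoc]
        _ = brk t * (brk v * brk (star s)) := by rw [prS_r1t' t s (brk (star s)), ← hv]
        _ = brk t * ((brk v * (brk (star v) * brk v)) * brk (star s)) := by
            rw [prS_r3n v]
        _ = brk t * (brk v * (brk (star v) * (brk v * brk (star s)))) := by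
            simp only [mul_assoc]
        _ = brk (t * v) * (brk (star v) * (brk v * brk (star s))) :=
            prS_r2t t v (brk v * brk (star s))
        _ = brk (t * v) * (brk (star v) * brk (v * star s)) := by rw [prS_r1n v (star s)]
        _ = brk ((t * v) * star v) * (brk (star (star v)) * (brk (star v) * brk (v * star s))) :=
            prS_m2r (t * v) (star v) Jd (brk (v * star s))
    rw [F, B, I4, I3, I2, I1]
end

section
/- Every semiprime associative algebra A is strongly associative: for every unital inverse semigroup S and every partial action α of S on A, the algebraic crossed product A ⋊_α S is associative. -/
open Finsupp

noncomputable section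

namespace PartialAction

variable {S : Type*} [Monoid S] [StarMul S] {A : Type*} [NonUnitalRing A]
variable (P : PartialAction S A)

theorem act_sum {ι : Type*} (s : S) (T : Finset ι) (F : ι → A)
    (h : ∀ i ∈ T, F i ∈ P.X (star s)) :
    P.act s (∑ i ∈ T, F i) = ∑ i ∈ T, P.act s (F i) := by
  classical
  induction T using Finset.cons_induction with
  | empty => simp [P.act_zero]
  | cons a T ha ih =>
    rw [Finset.sum_cons, Finset.sum_cons,
      P.act_add s (h a (Finset.mem_cons_self a T))
        (P.sum_mem _ T F fun i hi => h i (Finset.mem_cons_of_mem hi)),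
      ih (fun i hi => h i (Finset.mem_cons_of_mem hi))]

/-- The core coefficient identity, using semiprimeness. -/
theorem key_coeff
    (hsp : ∀ I : TwoSidedIdeal A, (∀ x ∈ I, ∀ y ∈ I, x * y = 0) → ∀ x ∈ I, x = 0)
    (s t u : S) {a b c : A} (ha : a ∈ P.X s) (hb : b ∈ P.X t) (hc : c ∈ P.X u) :
    P.act (s * t) (P.act (star (s * t)) (P.act s (P.act (star s) a * b)) * c)
      = P.act s (P.act (star s) a * P.act t (P.act (star t) b * c)) := by
  classical
  have ha' : a ∈ P.X (star (star s)) := by rwa [star_star]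
  have hb' : b ∈ P.X (star (star t)) := by rwa [star_star]
  set a' := P.act (star s) a with ha'def
  have ha'm : a' ∈ P.X (star s) := P.mem_act (star s) ha'
  set d := a' * b with hddef
  have hd1 : d ∈ P.X (star s) := P.mul_mem_right (star s) b ha'm
  have hd2 : d ∈ P.X t := P.mul_mem_left t a' hb
  have hd2' : d ∈ P.X (star (star t)) := by rwa [star_star]
  set D := P.act s d with hDdef
  have hDm : D ∈ P.X s := P.mem_act s hd1
  have hDm' : D ∈ P.X (star (star s)) := by rwa [star_star]
  have e1 : P.act (star s) D = d := P.act_act s hd1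
  have comp1 := P.comp (star t) (star s) hDm' (by rw [e1]; exact ⟨hd1, hd2'⟩)
  have step1 : P.act (star (s * t)) D = P.act (star t) d := by
    rw [star_mul, ← comp1, e1]
  set e := P.act (star t) b * c with hedef
  have hbm : P.act (star t) b ∈ P.X (star t) := P.mem_act (star t) hb'
  have hem : e ∈ P.X (star t) := P.mul_mem_right (star t) c hbm
  set E := P.act t e with hEdef
  have hEm : E ∈ P.X t := P.mem_act t hem
  have hEm' : E ∈ P.X (star (star t)) := by rwa [star_star]
  have hEe : P.act (star t) E = e := by rw [hEdef]; exact P.act_act t hem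
  set m := a' * E with hmdef
  have hm1 : m ∈ P.X (star s) := P.mul_mem_right (star s) E ha'm
  have hm2 : m ∈ P.X t := P.mul_mem_left t a' hEm
  have hm2' : m ∈ P.X (star (star t)) := by rwa [star_star]
  set x' := P.act (star t) d * c with hx'def
  have hdtm : P.act (star t) d ∈ P.X (star t) := P.mem_act (star t) hd2'
  have hx'm : x' ∈ P.X (star t) := P.mul_mem_right (star t) c hdtm
  set y' := P.act (star t) m with hy'def
  have hy'm : y' ∈ P.X (star t) := P.mem_act (star t) hm2'
  have e2 : P.act t y' = m := by
    rw [hy'def]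
    have h0 := P.act_act (star t) hm2'
    rwa [star_star] at h0
  have comp2 := P.comp s t hy'm (by rw [e2]; exact ⟨hm2, hm1⟩)
  have hann : ∀ w ∈ P.X (star t), w * x' = w * y' := by
    intro w hw
    have hp : P.act t w ∈ P.X t := P.mem_act t hw
    have hwp : P.act (star t) (P.act t w) = w := P.act_act t hw
    set p := P.act t w with hpdef
    have hp' : p ∈ P.X (star (star t)) := by rwa [star_star]
    have hpa : p * a' ∈ P.X t := P.mul_mem_right t a' hp
    have hpa' : p * a' ∈ P.X (star (star t)) := by rwa [star_star]
    have lhs : w * x' = P.act (star t) (p * d) * c := by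
      rw [hx'def, ← hwp, ← mul_assoc, ← P.act_mul (star t) hp' hd2']
    have rhs : w * y' = P.act (star t) (p * d) * c := by
      rw [hy'def, ← hwp, ← P.act_mul (star t) hp' hm2']
      have hpm : p * m = p * a' * E := by rw [hmdef]; exact (mul_assoc p a' E).symm
      rw [hpm, P.act_mul (star t) hpa' hEm', hEe, hedef, ← mul_assoc,
        ← P.act_mul (star t) hpa' hb']
      have hpd : p * a' * b = p * d := by rw [hddef]; exact mul_assoc p a' b
      rw [hpd]
    rw [lhs, rhs]
  have hveq : x' - y' = x' + -y' := sub_eq_add_neg _ _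
  have hvm : x' - y' ∈ P.X (star t) := by
    rw [hveq]; exact P.add_mem _ hx'm (P.neg_mem _ hy'm)
  have hvann : ∀ w ∈ P.X (star t), w * (x' - y') = 0 := fun w hw => by
    rw [mul_sub, hann w hw, sub_self]
  let I : TwoSidedIdeal A := TwoSidedIdeal.mk'
    {x | x ∈ P.X (star t) ∧ ∀ w ∈ P.X (star t), w * x = 0}
    ⟨P.zero_mem _, fun w _ => mul_zero w⟩
    (fun hx hy => ⟨P.add_mem _ hx.1 hy.1,
      fun w hw => by rw [mul_add, hx.2 w hw, hy.2 w hw, add_zero]⟩)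
    (fun hx => ⟨P.neg_mem _ hx.1, fun w hw => by rw [mul_neg, hx.2 w hw, neg_zero]⟩)
    (fun {x y} hy => ⟨P.mul_mem_left _ x hy.1, fun w hw => by
      rw [← mul_assoc]; exact hy.2 (w * x) (P.mul_mem_right _ x hw)⟩)
    (fun {x y} hx => ⟨P.mul_mem_right _ y hx.1, fun w hw => by
      rw [← mul_assoc, hx.2 w hw, zero_mul]⟩)
  have hv0 : x' - y' = 0 := by
    refine hsp I (fun p hp q hq => ?_) _ ?_
    · rw [TwoSidedIdeal.mem_mk'] at hp hq
      exact hq.2 p hp.1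
    · rw [TwoSidedIdeal.mem_mk']
      exact ⟨hvm, hvann⟩
  have hxy : x' = y' := sub_eq_zero.mp hv0
  calc P.act (s * t) (P.act (star (s * t)) D * c)
      = P.act (s * t) x' := by rw [step1, ← hx'def]
    _ = P.act (s * t) y' := by rw [hxy]
    _ = P.act s m := by rw [← comp2, e2]


noncomputable def mulFun (s t : S) (a b : A) : S →₀ A :=
  Finsupp.single (s * t) (P.act s (P.act (star s) a * b))

theorem mulFun_zero_left (s t : S) (b : A) : P.mulFun s t 0 b = 0 := by
  simp [mulFun, P.act_zero]

theorem mulFun_zero_right (s t : S) (a : A) : P.mulFun s t a 0 = 0 := by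
  simp [mulFun, P.act_zero]

theorem mul_val (f g : P.L) {Sf Sg : Finset S} (hf : f.1.support ⊆ Sf)
    (hg : g.1.support ⊆ Sg) :
    (f * g).1 = ∑ s ∈ Sf, ∑ t ∈ Sg, P.mulFun s t (f.1 s) (g.1 t) := by
  calc (f * g).1 = ∑ s ∈ f.1.support, ∑ t ∈ g.1.support, P.mulFun s t (f.1 s) (g.1 t) := rfl
    _ = ∑ s ∈ f.1.support, ∑ t ∈ Sg, P.mulFun s t (f.1 s) (g.1 t) := by
        refine Finset.sum_congr rfl fun s _ => Finset.sum_subset hg fun t _ ht => ?_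
        rw [Finsupp.notMem_support_iff.mp ht, P.mulFun_zero_right]
    _ = ∑ s ∈ Sf, ∑ t ∈ Sg, P.mulFun s t (f.1 s) (g.1 t) := by
        refine Finset.sum_subset hf fun s _ hs => ?_
        rw [Finsupp.notMem_support_iff.mp hs]
        exact Finset.sum_eq_zero fun t _ => P.mulFun_zero_left s t _

theorem support_mul [DecidableEq S] (f g : P.L) :
    (f * g).1.support ⊆ (f.1.support ×ˢ g.1.support).image fun q => q.1 * q.2 := by
  classical
  intro p hp
  by_contra hmem
  apply Finsupp.mem_support_iff.mp hp
  rw [P.mul_val f g (Finset.Subset.refl _) (Finset.Subset.refl _),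
    Finsupp.finset_sum_apply]
  refine Finset.sum_eq_zero fun s hs => ?_
  rw [Finsupp.finset_sum_apply]
  refine Finset.sum_eq_zero fun t ht => ?_
  simp only [mulFun, Finsupp.single_apply]
  rw [if_neg]
  exact fun h => hmem (Finset.mem_image.mpr ⟨(s, t), Finset.mem_product.mpr ⟨hs, ht⟩, h⟩)

theorem mul_apply [DecidableEq S] (f g : P.L) {Sf Sg : Finset S}
    (hf : f.1.support ⊆ Sf) (hg : g.1.support ⊆ Sg) (p : S) :
    (f * g).1 p = ∑ s ∈ Sf, ∑ t ∈ Sg,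
      if s * t = p then P.act s (P.act (star s) (f.1 s) * g.1 t) else 0 := by
  rw [P.mul_val f g hf hg, Finsupp.finset_sum_apply]
  refine Finset.sum_congr rfl fun s _ => ?_
  rw [Finsupp.finset_sum_apply]
  refine Finset.sum_congr rfl fun t _ => ?_
  simp only [mulFun, Finsupp.single_apply]

theorem mulFun_sum_left {ι : Type*} (p u : S) (T : Finset ι) (F : ι → A) (c : A)
    (hF : ∀ i ∈ T, F i ∈ P.X p) :
    P.mulFun p u (∑ i ∈ T, F i) c = ∑ i ∈ T, P.mulFun p u (F i) c := by
  have hF' : ∀ i ∈ T, F i ∈ P.X (star (star p)) := fun i hi => by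
    rw [star_star]; exact hF i hi
  simp only [mulFun]
  rw [P.act_sum (star p) T F hF', Finset.sum_mul,
    P.act_sum p T _ (fun i hi =>
      P.mul_mem_right (star p) c (P.mem_act (star p) (hF' i hi)))]
  exact map_sum (Finsupp.singleAddHom (p * u)) _ T

theorem mulFun_sum_right {ι : Type*} (s q : S) (a : A) (ha : a ∈ P.X s)
    (T : Finset ι) (C : ι → A) :
    P.mulFun s q a (∑ i ∈ T, C i) = ∑ i ∈ T, P.mulFun s q a (C i) := by
  have ha' : a ∈ P.X (star (star s)) := by rwa [star_star]
  simp only [mulFun]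
  rw [Finset.mul_sum,
    P.act_sum s T _ (fun i _ => P.mul_mem_right (star s) (C i) (P.mem_act (star s) ha'))]
  exact map_sum (Finsupp.singleAddHom (s * q)) _ T

theorem sum_collapse4 {M : Type*} [AddCommMonoid M] [DecidableEq S]
    {Sp Su Ss St : Finset S} (W : S → S → S → M)
    (hmem : ∀ s ∈ Ss, ∀ t ∈ St, s * t ∈ Sp) :
    (∑ p ∈ Sp, ∑ u ∈ Su, ∑ s ∈ Ss, ∑ t ∈ St, if s * t = p then W s t u else 0)
      = ∑ s ∈ Ss, ∑ t ∈ St, ∑ u ∈ Su, W s t u := by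
  rw [Finset.sum_comm]
  calc (∑ u ∈ Su, ∑ p ∈ Sp, ∑ s ∈ Ss, ∑ t ∈ St, if s * t = p then W s t u else 0)
      = ∑ u ∈ Su, ∑ s ∈ Ss, ∑ t ∈ St, W s t u := by
        refine Finset.sum_congr rfl fun u _ => ?_
        rw [Finset.sum_comm]
        refine Finset.sum_congr rfl fun s hs => ?_
        rw [Finset.sum_comm]
        refine Finset.sum_congr rfl fun t ht => ?_
        rw [Finset.sum_ite_eq Sp (s * t) fun _ => W s t u]
        exact if_pos (hmem s hs t ht)
    _ = ∑ s ∈ Ss, ∑ t ∈ St, ∑ u ∈ Su, W s t u := by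
        rw [Finset.sum_comm]
        exact Finset.sum_congr rfl fun s _ => Finset.sum_comm

theorem sum_collapse3 {M : Type*} [AddCommMonoid M] [DecidableEq S]
    {Sq St Su : Finset S} (W : S → S → M)
    (hmem : ∀ t ∈ St, ∀ u ∈ Su, t * u ∈ Sq) :
    (∑ q ∈ Sq, ∑ t ∈ St, ∑ u ∈ Su, if t * u = q then W t u else 0)
      = ∑ t ∈ St, ∑ u ∈ Su, W t u := by
  rw [Finset.sum_comm]
  refine Finset.sum_congr rfl fun t ht => ?_
  rw [Finset.sum_comm]
  refine Finset.sum_congr rfl fun u hu => ?_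
  rw [Finset.sum_ite_eq Sq (t * u) fun _ => W t u]
  exact if_pos (hmem t ht u hu)

theorem L_assoc
    (hsp : ∀ I : TwoSidedIdeal A, (∀ x ∈ I, ∀ y ∈ I, x * y = 0) → ∀ x ∈ I, x = 0)
    (f g h : P.L) : f * g * h = f * (g * h) := by
  classical
  apply Subtype.ext
  have hGmem : ∀ p s' t' : S,
      (if s' * t' = p then P.act s' (P.act (star s') (f.1 s') * g.1 t') else 0) ∈ P.X p := by
    intro p s' t'
    by_cases hc : s' * t' = p
    · rw [if_pos hc]; exact hc ▸ P.mul_term_mem s' t' (f.2 s') (g.2 t')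
    · rw [if_neg hc]; exact P.zero_mem p
  have lhs_eq : (f * g * h).1 = ∑ s ∈ f.1.support, ∑ t ∈ g.1.support, ∑ u ∈ h.1.support,
      P.mulFun (s * t) u (P.act s (P.act (star s) (f.1 s) * g.1 t)) (h.1 u) := by
    rw [P.mul_val (f * g) h (P.support_mul f g) (Finset.Subset.refl _)]
    refine Eq.trans (Finset.sum_congr rfl fun p hp => Finset.sum_congr rfl fun u hu => ?_)
      (sum_collapse4 _ fun s hs t ht =>
        Finset.mem_image.mpr ⟨(s, t), Finset.mem_product.mpr ⟨hs, ht⟩, rfl⟩)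
    rw [P.mul_apply f g (Finset.Subset.refl _) (Finset.Subset.refl _) p,
      P.mulFun_sum_left p u f.1.support _ (h.1 u)
        (fun s _ => P.sum_mem p g.1.support _ fun t _ => hGmem p s t)]
    refine Finset.sum_congr rfl fun s hs => ?_
    rw [P.mulFun_sum_left p u g.1.support _ (h.1 u) (fun t _ => hGmem p s t)]
    refine Finset.sum_congr rfl fun t ht => ?_
    by_cases hc : s * t = p
    · subst hc; rw [if_pos rfl, if_pos rfl]
    · rw [if_neg hc, if_neg hc, P.mulFun_zero_left]
  have rhs_eq : (f * (g * h)).1 = ∑ s ∈ f.1.support, ∑ t ∈ g.1.support, ∑ u ∈ h.1.support,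
      P.mulFun s (t * u) (f.1 s) (P.act t (P.act (star t) (g.1 t) * h.1 u)) := by
    rw [P.mul_val f (g * h) (Finset.Subset.refl _) (P.support_mul g h)]
    refine Finset.sum_congr rfl fun s hs => ?_
    refine Eq.trans (Finset.sum_congr rfl fun q hq => ?_)
      (sum_collapse3 _ fun t ht u hu =>
        Finset.mem_image.mpr ⟨(t, u), Finset.mem_product.mpr ⟨ht, hu⟩, rfl⟩)
    rw [P.mul_apply g h (Finset.Subset.refl _) (Finset.Subset.refl _) q,
      P.mulFun_sum_right s q (f.1 s) (f.2 s) g.1.support _]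
    refine Finset.sum_congr rfl fun t ht => ?_
    rw [P.mulFun_sum_right s q (f.1 s) (f.2 s) h.1.support _]
    refine Finset.sum_congr rfl fun u hu => ?_
    by_cases hc : t * u = q
    · subst hc; rw [if_pos rfl, if_pos rfl]
    · rw [if_neg hc, if_neg hc, P.mulFun_zero_right]
  rw [lhs_eq, rhs_eq]
  refine Finset.sum_congr rfl fun s _ => Finset.sum_congr rfl fun t _ =>
    Finset.sum_congr rfl fun u _ => ?_
  simp only [mulFun]
  rw [mul_assoc s t u, P.key_coeff hsp s t u (f.2 s) (g.2 t) (h.2 u)]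

end PartialAction

/-- A semiprime algebra is strongly associative: every algebraic crossed product
by a partial action of a unital inverse semigroup is associative. -/
theorem semiprime_strongly_associative
    {A : Type*} [NonUnitalRing A]
    (hsp : ∀ I : TwoSidedIdeal A, (∀ x ∈ I, ∀ y ∈ I, x * y = 0) → ∀ x ∈ I, x = 0)
    {S : Type*} [Monoid S] [StarMul S]
    (hinv : ∀ s : S, s * star s * s = s)
    (hcomm : ∀ s t : S, (s * star s) * (t * star t) = (t * star t) * (s * star s))
    (P : PartialAction S A) :
    ∀ x y z : P.CP, x * y * z = x * (y * z) := by
  intro x y z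
  obtain ⟨a⟩ := x
  obtain ⟨b⟩ := y
  obtain ⟨c⟩ := z
  show ((a : P.CP) * b * c) = (a : P.CP) * ((b : P.CP) * (c : P.CP))
  rw [← RingCon.coe_mul, ← RingCon.coe_mul, ← RingCon.coe_mul, ← RingCon.coe_mul,
    P.L_assoc hsp a b c]
end
end

section
/- Let π : S → B be a partial representation, J the ideal of B generated by {aπ(s) − aπ(t) : a ∈ B, s ≤ t}, π̃ : S → B/J the induced partial representation, A ⊆ B/J the subalgebra generated by ε̃_s = π̃(s)π̃(s*), and α^π̃ the associated partial action on A. Then the map φ_π̃ : A ⋊_{α^π̃} S → B/J sending Σ a_s δ_s to Σ a_s π̃(s) is a well-defined homomorphism of K-algebras. -/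
open Finsupp

noncomputable section

/-!
For `ε s = π s * π (star s)` the partial-representation axioms, together with the commutation
of the idempotents `s s⋆` of `S`, give Exel's rules `π s * ε t = ε (s t) * π s` and
`ε t * π s = π s * ε (s⋆ t)`; hence the `ε s` commute pairwise, and every element of `A`
commutes with every `ε s`. With this, `α_s (α_{s⋆} a * b) π̃ (s t) = a π̃ s * b π̃ t` for
`a ∈ X s`, `b ∈ X t`, so the integrated form `Σ a_s δ_s ↦ Σ a_s π̃ s` is multiplicative on `L`.
It identifies `a δ_r` and `a δ_t` for `r ≤ t` because `a π̃ r = a π̃ t` holds in `B/J` by the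
very definition of `J`, so it descends to the crossed product.
-/

structure IsPartialRep {S R : Type*} [Mul S] [Star S] [Mul R] (ρ : S → R) : Prop where
  star_mul_mul : ∀ s t, ρ (star s) * ρ s * ρ t = ρ (star s) * ρ (s * t)
  mul_mul_star : ∀ s t, ρ s * ρ t * ρ (star t) = ρ (s * t) * ρ (star t)
  mul_star_mul : ∀ s, ρ s * ρ (star s) * ρ s = ρ s

namespace IsPartialRep

variable {S R : Type*} [Semigroup S] [StarMul S] [Semigroup R] {ρ : S → R}

theorem comp {R' : Type*} [Mul R'] (hρ : IsPartialRep ρ) (f : R →ₙ* R') :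
    IsPartialRep (f ∘ ρ) where
  star_mul_mul s t := by simp only [Function.comp_apply, ← map_mul, hρ.star_mul_mul]
  mul_mul_star s t := by simp only [Function.comp_apply, ← map_mul, hρ.mul_mul_star]
  mul_star_mul s := by simp only [Function.comp_apply, ← map_mul, hρ.mul_star_mul]

theorem mul_star_mul_apply (hρ : IsPartialRep ρ) (s t : S) :
    ρ s * ρ (star s) * ρ t = ρ s * ρ (star s * t) := by
  simpa only [star_star] using hρ.star_mul_mul (star s) t

theorem isIdempotentElem (hρ : IsPartialRep ρ) (s : S) :
    IsIdempotentElem (ρ s * ρ (star s)) := by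
  rw [IsIdempotentElem, ← mul_assoc, hρ.mul_star_mul]

theorem mul_eq_mul_star_self_mul (hρ : IsPartialRep ρ) (x y : S) :
    ρ x * ρ y = ρ x * ρ (star x * x * y) := by
  calc ρ x * ρ y = ρ x * (ρ (star x) * ρ x * ρ y) := by
        rw [← mul_assoc, ← mul_assoc, hρ.mul_star_mul]
    _ = ρ x * ρ (star x) * ρ (x * y) := by rw [hρ.star_mul_mul, mul_assoc]
    _ = ρ x * ρ (star x * x * y) := by rw [hρ.mul_star_mul_apply, mul_assoc]

theorem mul_eq_mul_self_star_mul (hρ : IsPartialRep ρ) (x y : S) :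
    ρ y * ρ x = ρ (y * x * star x) * ρ x := by
  calc ρ y * ρ x = ρ y * ρ x * ρ (star x) * ρ x := by
        rw [mul_assoc (ρ y * ρ x), mul_assoc (ρ y), ← mul_assoc (ρ x), hρ.mul_star_mul]
    _ = ρ (y * x * star x) * ρ x := by
        rw [hρ.mul_mul_star y x]
        simpa only [star_star] using hρ.mul_mul_star (y * x) (star x)

theorem mul_mul_self_star (hρ : IsPartialRep ρ)
    (hinv : ∀ s : S, s * star s * s = s)
    (hcomm : ∀ s t : S, (s * star s) * (t * star t) = (t * star t) * (s * star s)) (s t : S) :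
    ρ s * (ρ t * ρ (star t)) = ρ (s * t) * ρ (star (s * t)) * ρ s := by
  have hdom : star (s * t) * (s * t) * star t = star (s * t) * s := by
    have hst := hcomm (star s) t
    have ht := hinv (star t)
    rw [star_star] at hst ht
    calc star (s * t) * (s * t) * star t = star t * ((star s * s) * (t * star t)) := by
          simp only [star_mul, mul_assoc]
      _ = (star t * t * star t) * (star s * s) := by rw [hst]; simp only [mul_assoc]
      _ = star (s * t) * s := by rw [ht, star_mul, mul_assoc]
  rw [← mul_assoc, hρ.mul_mul_star, hρ.mul_eq_mul_star_self_mul (s * t), hdom,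
    hρ.mul_star_mul_apply]

theorem mul_self_star_mul (hρ : IsPartialRep ρ)
    (hinv : ∀ s : S, s * star s * s = s)
    (hcomm : ∀ s t : S, (s * star s) * (t * star t) = (t * star t) * (s * star s)) (s t : S) :
    ρ t * ρ (star t) * ρ s = ρ s * (ρ (star s * t) * ρ (star (star s * t))) := by
  have hran : t * (star t * s) * star (star t * s) = s * (star s * t) := by
    calc t * (star t * s) * star (star t * s) = (t * star t) * (s * star s) * t := by
          simp only [star_mul, star_star, mul_assoc]
      _ = s * (star s * t) := by rw [← hcomm, mul_assoc (s * star s), hinv, mul_assoc]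
  rw [hρ.mul_star_mul_apply, hρ.mul_eq_mul_self_star_mul (star t * s), hran, ← mul_assoc (ρ s),
    hρ.mul_mul_star, star_mul, star_star]

theorem commute_mul_star (hρ : IsPartialRep ρ)
    (hinv : ∀ s : S, s * star s * s = s)
    (hcomm : ∀ s t : S, (s * star s) * (t * star t) = (t * star t) * (s * star s)) (s t : S) :
    Commute (ρ s * ρ (star s)) (ρ t * ρ (star t)) := by
  have h := hρ.mul_mul_self_star hinv hcomm (star s) t
  calc ρ s * ρ (star s) * (ρ t * ρ (star t))
      = ρ s * (ρ (star s * t) * ρ (star (star s * t))) * ρ (star s) := by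
        rw [mul_assoc, h, ← mul_assoc, ← mul_assoc]
    _ = ρ t * ρ (star t) * (ρ s * ρ (star s)) := by
        rw [← hρ.mul_self_star_mul hinv hcomm, mul_assoc]

theorem conj_mul_mul_apply (hρ : IsPartialRep ρ) {s : S} (t : S) {a b : R}
    (ha : ρ s * ρ (star s) * a = a) (hb : Commute b (ρ (star s) * ρ s)) :
    ρ s * (ρ (star s) * a * ρ s * b) * ρ (star s) * ρ (s * t) = a * ρ s * (b * ρ t) := by
  calc ρ s * (ρ (star s) * a * ρ s * b) * ρ (star s) * ρ (s * t)
      = ρ s * (ρ (star s) * a * ρ s * b) * (ρ (star s) * ρ s * ρ t) := by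
        rw [hρ.star_mul_mul, mul_assoc _ (ρ (star s))]
    _ = ρ s * ρ (star s) * a * ρ s * (b * (ρ (star s) * ρ s)) * ρ t := by
        simp only [mul_assoc]
    _ = a * (ρ s * ρ (star s) * ρ s) * (b * ρ t) := by
        rw [ha, hb.eq]; simp only [mul_assoc]
    _ = a * ρ s * (b * ρ t) := by rw [hρ.mul_star_mul]

end IsPartialRep

theorem exists_lift_ringConGen {M R : Type*} [Add M] [Mul M] [Add R] [Mul R]
    {r : M → M → Prop} (Φ : M → R) (hadd : ∀ x y, Φ (x + y) = Φ x + Φ y)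
    (hmul : ∀ x y, Φ (x * y) = Φ x * Φ y) (hr : ∀ x y, r x y → Φ x = Φ y) :
    ∃ φ : (ringConGen r).Quotient → R, (∀ x : M, φ x = Φ x) ∧
      (∀ x y, φ (x + y) = φ x + φ y) ∧ (∀ x y, φ (x * y) = φ x * φ y) := by
  let ker : RingCon M :=
    { r := fun x y => Φ x = Φ y
      iseqv := ⟨fun _ => rfl, Eq.symm, Eq.trans⟩
      add' := fun h h' => by simp only [hadd, h, h']
      mul' := fun h h' => by simp only [hmul, h, h'] }
  have hle : ringConGen r ≤ ker := RingCon.ringConGen_le.mpr hr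
  refine ⟨fun x => Quotient.liftOn' x Φ fun _ _ h => hle h, fun _ => rfl, ?_, ?_⟩
  · rintro ⟨x⟩ ⟨y⟩
    exact hadd x y
  · rintro ⟨x⟩ ⟨y⟩
    exact hmul x y

namespace PartialAction

variable {S : Type*} [Monoid S] [StarMul S] {A : Type*} [NonUnitalRing A] (P : PartialAction S A)
variable {R : Type*} [NonUnitalNonAssocSemiring R] (ι : A →+ R) (ρ : S → R)

def integratedForm (f : P.L) : R := f.1.sum fun u a => ι a * ρ u

theorem integratedForm_add (f g : P.L) :
    P.integratedForm ι ρ (f + g) = P.integratedForm ι ρ f + P.integratedForm ι ρ g := by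
  classical
  exact Finsupp.sum_add_index' (by simp) (by simp [add_mul])

theorem integratedForm_del (r : S) (a : A) (h : a ∈ P.X r) :
    P.integratedForm ι ρ (P.del r a h) = ι a * ρ r :=
  Finsupp.sum_single_index (by simp)

variable {P ι ρ}

theorem integratedForm_mul
    (hcov : ∀ s t a b, a ∈ P.X s → b ∈ P.X t →
      ι (P.act s (P.act (star s) a * b)) * ρ (s * t) = ι a * ρ s * (ι b * ρ t))
    (f g : P.L) :
    P.integratedForm ι ρ (f * g) = P.integratedForm ι ρ f * P.integratedForm ι ρ g := by
  classical
  have h0 : ∀ u, ι 0 * ρ u = 0 := by simp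
  have hadd : ∀ u a b, ι (a + b) * ρ u = ι a * ρ u + ι b * ρ u := by simp [add_mul]
  change (f.1.sum fun s a => g.1.sum fun t b =>
      Finsupp.single (s * t) (P.act s (P.act (star s) a * b))).sum (fun u a => ι a * ρ u) = _
  rw [Finsupp.sum_sum_index h0 hadd, integratedForm, Finsupp.sum_mul]
  refine Finsupp.sum_congr fun s _ => ?_
  rw [Finsupp.sum_sum_index h0 hadd, integratedForm, Finsupp.mul_sum]
  refine Finsupp.sum_congr fun t _ => ?_
  rw [Finsupp.sum_single_index (h0 _)]
  exact hcov s t _ _ (f.2 s) (g.2 t)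

theorem exists_hom_of_covariant
    (hcov : ∀ s t a b, a ∈ P.X s → b ∈ P.X t →
      ι (P.act s (P.act (star s) a * b)) * ρ (s * t) = ι a * ρ s * (ι b * ρ t))
    (hle : ∀ r t a, sle r t → ι a * ρ r = ι a * ρ t) :
    ∃ φ : P.CP → R, (∀ f, φ (P.toCP f) = P.integratedForm ι ρ f) ∧
      (∀ x y, φ (x + y) = φ x + φ y) ∧ (∀ x y, φ (x * y) = φ x * φ y) := by
  refine exists_lift_ringConGen _ (P.integratedForm_add ι ρ) (integratedForm_mul hcov) ?_
  rintro _ _ ⟨r, t, a, -, -, hrt, rfl, rfl⟩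
  rw [integratedForm_del, integratedForm_del, hle r t a hrt]

end PartialAction

theorem mul_coe_eq_of_sle {S B : Type*} [Mul S] [Star S] [Add B] [Mul B] (π : S → B)
    {r t : S} (hrt : sle r t)
    (x : (ringConGen fun x y =>
      ∃ (a : B) (s t : S), sle s t ∧ x = a * π s ∧ y = a * π t).Quotient) :
    x * (π r : _) = x * (π t : _) := by
  induction x using Quotient.inductionOn' with
  | h a => exact (RingCon.eq _).mpr (RingConGen.Rel.of _ _ ⟨a, r, t, hrt, rfl, rfl⟩)

/-- The map `φ_π̃ : A ⋊_{α^π̃} S → B/J`, `Σ a_s δ_s ↦ Σ a_s π̃(s)`, is a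
well-defined algebra homomorphism.  Here `B/J` is realized as the quotient of
`B` by the ring congruence generated by `a π s ~ a π t` (`s ≤ t`), `π̃` is the
induced partial representation, `A` is the subalgebra of `B/J` generated by the
`ε̃_s = π̃ s π̃ (s*)`, and `α^π̃` is the associated partial action
`X_s = ε̃_s A`, `α_s (a) = π̃ s a π̃ (s*)`. -/
theorem phi_hom_of_partialRep
    {S : Type*} [Monoid S] [StarMul S]
    (hinv : ∀ s : S, s * star s * s = s)
    (hcomm : ∀ s t : S, (s * star s) * (t * star t) = (t * star t) * (s * star s))
    {K : Type*} [CommRing K] {B : Type*} [Ring B] [Algebra K B]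
    (π : S → B)
    (hπ1 : ∀ s t : S, π (star s) * π s * π t = π (star s) * π (s * t))
    (hπ2 : ∀ s t : S, π s * π t * π (star t) = π (s * t) * π (star t))
    (hπ3 : ∀ s : S, π s * π (star s) * π s = π s)
    (relJ : B → B → Prop)
    (hrelJ : relJ = fun x y => ∃ (a : B) (s t : S), sle s t ∧ x = a * π s ∧ y = a * π t)
    (πt : S → (ringConGen relJ).Quotient)
    (hπt : ∀ s, πt s = ((π s : B) : (ringConGen relJ).Quotient))
    (Asub : NonUnitalSubalgebra K (ringConGen relJ).Quotient)
    (hAsub : Asub = NonUnitalAlgebra.adjoin K (Set.range fun s => πt s * πt (star s)))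
    (P : PartialAction S ↥Asub)
    (hPX : ∀ s : S, (Subtype.val '' P.X s) =
      {x : (ringConGen relJ).Quotient | ∃ b ∈ Asub, x = (πt s * πt (star s)) * b})
    (hPact : ∀ s : S, ∀ a ∈ P.X (star s),
      ((P.act s a : ↥Asub) : (ringConGen relJ).Quotient) = πt s * (a : (ringConGen relJ).Quotient) * πt (star s)) :
    ∃ φ : P.CP → (ringConGen relJ).Quotient,
      (∀ f : P.L, φ (P.toCP f) =
        ∑ u ∈ f.1.support, ((f.1 u : (ringConGen relJ).Quotient) * πt u)) ∧
      (∀ x y, φ (x + y) = φ x + φ y) ∧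
      (∀ x y, φ (x * y) = φ x * φ y) := by
  have hρ : IsPartialRep πt := by
    rw [show πt = RingCon.mk' _ ∘ π from funext hπt]
    exact IsPartialRep.comp ⟨hπ1, hπ2, hπ3⟩ (MulHomClass.toMulHom (RingCon.mk' _))
  have hunit : ∀ s, ∀ a ∈ P.X s, πt s * πt (star s) * (a : (ringConGen relJ).Quotient) = a := by
    intro s a ha
    have hmem : (a : (ringConGen relJ).Quotient) ∈ Subtype.val '' P.X s := ⟨a, ha, rfl⟩
    obtain ⟨b, -, hb⟩ : (a : (ringConGen relJ).Quotient) ∈ _ := hPX s ▸ hmem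
    rw [hb, ← mul_assoc, (hρ.isIdempotentElem s).eq]
  have hcentral : ∀ s (b : Asub),
      Commute (b : (ringConGen relJ).Quotient) (πt (star s) * πt s) := by
    intro s b
    have hb : (b : (ringConGen relJ).Quotient) ∈
        NonUnitalAlgebra.adjoin K (Set.range fun s => πt s * πt (star s)) := hAsub ▸ b.2
    refine (NonUnitalAlgebra.commute_of_mem_adjoin_of_forall_mem_commute hb ?_).symm
    rintro _ ⟨u, rfl⟩
    simpa only [star_star] using hρ.commute_mul_star hinv hcomm (star s) u
  refine PartialAction.exists_hom_of_covariant (ι := AddSubmonoidClass.subtype Asub) ?_ ?_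
  · intro s t a b ha hb
    have ha' : a ∈ P.X (star (star s)) := by rwa [star_star]
    have hmem := P.mul_mem_right _ b (P.mem_act (star s) ha')
    simp only [AddSubmonoidClass.coe_subtype]
    rw [hPact s _ hmem, MulMemClass.coe_mul, hPact (star s) a ha', star_star]
    exact hρ.conj_mul_mul_apply t (hunit s a ha) (hcentral s b)
  · intro r t a hrt
    subst hrelJ
    simp only [hπt]
    exact mul_coe_eq_of_sle π hrt _
end
end
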